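/- arXiv:2110.04154 — 6 statements merged into one kernel-verified Lean document; each statement's English description precedes it below -/
import Mathlib

section
/- Let G be a graph and T a determining set for G such that the induced subgraph G[T] is asymmetric (has trivial automorphism group). Then G is 2-distinguishable, and the coloring assigning one color to T and another to V(G)\T is a 2-distinguishing coloring. -/
/-- `S` is a determining set for `G`: the only automorphism fixing `S` pointwise
is the identity. -/
def IsDeterminingSet {V : Type*} (G : SimpleGraph V) (S : Set V) : Prop :=
  ∀ φ : G ≃g G, (∀ v ∈ S, φ v = v) → ∀ v, φ v = v

/-- The determining number: minimum size of a determining set. -/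
noncomputable def detNum {V : Type*} (G : SimpleGraph V) : ℕ :=
  sInf {r | ∃ S : Set V, S.ncard = r ∧ IsDeterminingSet G S}

/-- A coloring is distinguishing if the only automorphism preserving all color
classes is the identity. -/
def IsDistinguishing {V : Type*} (G : SimpleGraph V) {d : ℕ} (c : V → Fin d) : Prop :=
  ∀ φ : G ≃g G, (∀ v, c (φ v) = c v) → ∀ v, φ v = v

/-- The distinguishing number: least `d` admitting a distinguishing `d`-coloring. -/
noncomputable def distNum {V : Type*} (G : SimpleGraph V) : ℕ :=
  sInf {d | ∃ c : V → Fin d, IsDistinguishing G c}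

/-- `S` is a color class of a 2-distinguishing coloring: every automorphism
preserving `S` setwise is the identity. -/
def IsDistClass {V : Type*} (G : SimpleGraph V) (S : Set V) : Prop :=
  ∀ φ : G ≃g G, (∀ v, φ v ∈ S ↔ v ∈ S) → ∀ v, φ v = v

/-- The cost of 2-distinguishing: minimum size of a color class over all
2-distinguishing colorings. -/
noncomputable def costNum {V : Type*} (G : SimpleGraph V) : ℕ :=
  sInf {m | ∃ S : Set V, S.ncard = m ∧ IsDistClass G S}

/-- An automorphism preserving `T` setwise restricts to an automorphism of `G[T]`; when `G[T]` is
asymmetric that restriction is trivial, so the automorphism fixes `T` pointwise. -/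
theorem IsDeterminingSet.isDistClass {V : Type*} {G : SimpleGraph V} {T : Set V}
    (hdet : IsDeterminingSet G T)
    (hasym : ∀ φ : G.induce T ≃g G.induce T, ∀ v, φ v = v) : IsDistClass G T := by
  intro φ hφ
  refine hdet φ fun v hv => ?_
  have hbij : Set.BijOn φ T T := φ.toEquiv.bijOn hφ
  exact congrArg Subtype.val (hasym (φ.induce hbij) ⟨v, hv⟩)

theorem IsDistClass.isDistinguishing_of_fiber {V : Type*} {G : SimpleGraph V} {d : ℕ}
    {c : V → Fin d} {i : Fin d} (h : IsDistClass G (c ⁻¹' {i})) : IsDistinguishing G c :=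
  fun φ hφ => h φ fun v => by simp only [Set.mem_preimage, Set.mem_singleton_iff, hφ v]

theorem IsDistClass.exists_isDistinguishing_fin_two {V : Type*} {G : SimpleGraph V} {S : Set V}
    (h : IsDistClass G S) : ∃ c : V → Fin 2, IsDistinguishing G c := by
  classical
  refine ⟨fun v => if v ∈ S then 0 else 1, IsDistClass.isDistinguishing_of_fiber (i := 0) ?_⟩
  convert h using 1
  ext v
  by_cases hv : v ∈ S <;> simp [hv]

/-- If `T` is a determining set for `G` and the induced subgraph `G[T]` is
asymmetric, then `G` is 2-distinguishable and the coloring with classes `T` and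
its complement is 2-distinguishing. -/
theorem stmt0 {V : Type*} (G : SimpleGraph V) (T : Set V)
    (hdet : IsDeterminingSet G T)
    (hasym : ∀ φ : (G.induce T) ≃g (G.induce T), ∀ v, φ v = v) :
    IsDistClass G T ∧ ∃ c : V → Fin 2, IsDistinguishing G c :=
  have hclass := hdet.isDistClass hasym
  ⟨hclass, hclass.exists_isDistinguishing_fin_two⟩
end

section
/- For n > 3, the set S = {U_0, U_1, ..., U_{n-1}}, where U_i has 1's in the first i positions and 0's elsewhere, is a determining set for Q_n^2; hence det(Q_n^2) ≤ n. -/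
/-- The square `Q_n^2` of the hypercube: binary `n`-vectors, adjacent iff their
Hamming distance is 1 or 2. -/
def Qsq (n : ℕ) : SimpleGraph (Fin n → ZMod 2) :=
  SimpleGraph.fromRel (fun x y => hammingDist x y ≤ 2)

/-- `U n i` is the binary vector with 1's in positions `1, …, i` and 0's elsewhere. -/
def U (n i : ℕ) : Fin n → ZMod 2 := fun j => if (j : ℕ) < i then 1 else 0

open Function Finset

section Hamming

variable {ι : Type*} [Fintype ι] {β : ι → Type*} [∀ i, DecidableEq (β i)]

theorem card_le_hammingDist {x y : ∀ i, β i} {s : Finset ι} (h : ∀ i ∈ s, x i ≠ y i) :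
    #s ≤ hammingDist x y :=
  card_le_card fun i hi => mem_filter.mpr ⟨mem_univ i, h i hi⟩

variable [DecidableEq ι]

theorem hammingDist_update_add (x y : ∀ i, β i) (j : ι) (b : β j) :
    hammingDist x (update y j b) + (if x j = y j then 0 else 1) =
      hammingDist x y + (if x j = b then 0 else 1) := by
  simp only [hammingDist, card_filter]
  rw [← add_sum_erase _ _ (mem_univ j), ← add_sum_erase _ _ (mem_univ j),
    sum_congr rfl fun i hi => by rw [update_of_ne (ne_of_mem_erase hi)]]
  simp only [update_self, ite_not]
  ring

theorem hammingDist_update_self_le_one (x : ∀ i, β i) (j : ι) (b : β j) :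
    hammingDist x (update x j b) ≤ 1 := by
  have := hammingDist_update_add x x j b
  simp only [hammingDist_self, if_true] at this
  split_ifs at this <;> omega

theorem hammingDist_update_add_one {x y : ∀ i, β i} {j : ι} (h : x j ≠ y j) :
    hammingDist (update x j (y j)) y + 1 = hammingDist x y := by
  have := hammingDist_update_add y x j (y j)
  rw [if_neg h.symm, if_pos rfl] at this
  rw [hammingDist_comm, this, hammingDist_comm, add_zero]

theorem exists_hammingDist_le_one_add_one {x y : ∀ i, β i} (h : x ≠ y) :
    ∃ z, hammingDist x z ≤ 1 ∧ hammingDist z y + 1 = hammingDist x y := by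
  obtain ⟨j, hj⟩ := ne_iff.mp h
  exact ⟨_, hammingDist_update_self_le_one x j (y j), hammingDist_update_add_one hj⟩

end Hamming

namespace SimpleGraph

variable {V V' : Type*} {G : SimpleGraph V} {G' : SimpleGraph V'}

theorem Reachable.dist_map_le {u v : V} (h : G.Reachable u v) (f : G →g G') :
    G'.dist (f u) (f v) ≤ G.dist u v := by
  obtain ⟨p, hp⟩ := h.exists_walk_length_eq_dist
  simpa [hp] using dist_le (p.map f)

theorem Iso.dist_map (f : G ≃g G') (u v : V) : G'.dist (f u) (f v) = G.dist u v := by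
  by_cases h : G.Reachable u v
  · refine le_antisymm (h.dist_map_le f.toHom) ?_
    simpa using (h.map f.toHom).dist_map_le f.symm.toHom
  · rw [dist_eq_zero_of_not_reachable h,
      dist_eq_zero_of_not_reachable (mt Iso.reachable_iff.mp h)]

end SimpleGraph

namespace Qsq

variable {n : ℕ}

theorem adj_iff {x y : Fin n → ZMod 2} : (Qsq n).Adj x y ↔ x ≠ y ∧ hammingDist x y ≤ 2 := by
  rw [Qsq, SimpleGraph.fromRel_adj, hammingDist_comm y x, or_self]

theorem exists_walk_length_le (k : ℕ) {x y : Fin n → ZMod 2} (h : hammingDist x y ≤ 2 * k) :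
    ∃ p : (Qsq n).Walk x y, p.length ≤ k := by
  induction k generalizing x with
  | zero =>
    obtain rfl := hammingDist_eq_zero.mp (Nat.le_zero.mp h)
    exact ⟨.nil, le_rfl⟩
  | succ k ih =>
    by_cases hxy : x = y
    · subst hxy
      exact ⟨.nil, by simp⟩
    by_cases h2 : hammingDist x y ≤ 2
    · exact ⟨.cons (adj_iff.mpr ⟨hxy, h2⟩) .nil, by simp⟩
    obtain ⟨z₁, hxz₁, hz₁y⟩ := exists_hammingDist_le_one_add_one hxy
    obtain ⟨z, hz₁z, hzy⟩ := exists_hammingDist_le_one_add_one (x := z₁) (y := y)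
      (by rintro rfl; simp at hz₁y; omega)
    have hxz : (Qsq n).Adj x z := by
      refine adj_iff.mpr ⟨by rintro rfl; omega, ?_⟩
      linarith [hammingDist_triangle x z₁ z]
    obtain ⟨p, hp⟩ := ih (x := z) (by omega)
    exact ⟨.cons hxz p, by simpa using hp⟩

theorem hammingDist_le_two_mul_length {x y : Fin n → ZMod 2} (p : (Qsq n).Walk x y) :
    hammingDist x y ≤ 2 * p.length := by
  induction p with
  | nil => simp
  | @cons u v w h q ih =>
    rw [SimpleGraph.Walk.length_cons]
    linarith [hammingDist_triangle u v w, (adj_iff.mp h).2]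

theorem dist_eq (x y : Fin n → ZMod 2) : (Qsq n).dist x y = (hammingDist x y + 1) / 2 := by
  obtain ⟨p, hp⟩ := exists_walk_length_le ((hammingDist x y + 1) / 2) (x := x) (y := y) (by omega)
  obtain ⟨q, hq⟩ := SimpleGraph.Reachable.exists_walk_length_eq_dist ⟨p⟩
  have := hammingDist_le_two_mul_length q
  have := SimpleGraph.dist_le p
  omega

end Qsq

theorem zmod_two_eq_zero_or_one (a : ZMod 2) : a = 0 ∨ a = 1 := by
  revert a; decide

section Staircase

variable {n : ℕ}

theorem U_succ (j : Fin n) : U n (j + 1) = update (U n j) j 1 := by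
  funext i
  rcases eq_or_ne i j with rfl | hij
  · simp [U]
  · have : (i : ℕ) ≠ j := Fin.val_ne_of_ne hij
    simp only [U, update_of_ne hij]
    grind

theorem hammingDist_U_succ (x : Fin n → ZMod 2) (j : Fin n) :
    hammingDist x (U n (j + 1)) + (if x j = 0 then 0 else 1) =
      hammingDist x (U n j) + (if x j = 1 then 0 else 1) := by
  have hU : U n j j = 0 := by simp [U]
  simpa [U_succ, hU] using hammingDist_update_add x (U n j) j 1

theorem hammingDist_U_zero_add_U_self (x : Fin n → ZMod 2) :
    hammingDist x (U n 0) + hammingDist x (U n n) = n := by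
  have h1 : ∀ j, x j ≠ 1 ↔ ¬x j ≠ 0 := fun j => by
    rcases zmod_two_eq_zero_or_one (x j) with h | h <;> simp [h]
  simp only [hammingDist, U, Nat.not_lt_zero, if_false, Fin.is_lt, if_true, h1]
  simpa using card_filter_add_card_filter_not (s := univ) (fun j => x j ≠ 0)

end Staircase

section Profile

variable {n : ℕ} {x y : Fin n → ZMod 2} {j : Fin n}

theorem hammingDist_U_succ_eq_iff
    (hj : (hammingDist x (U n j) + 1) / 2 = (hammingDist y (U n j) + 1) / 2)
    (hj' : (hammingDist x (U n (j + 1)) + 1) / 2 = (hammingDist y (U n (j + 1)) + 1) / 2) :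
    hammingDist x (U n (j + 1)) = hammingDist y (U n (j + 1)) ↔
      hammingDist x (U n j) = hammingDist y (U n j) := by
  have hx := hammingDist_U_succ x j
  have hy := hammingDist_U_succ y j
  rcases zmod_two_eq_zero_or_one (x j) with h | h <;>
    rcases zmod_two_eq_zero_or_one (y j) with h' | h' <;> simp [h, h'] at hx hy <;> omega

theorem apply_eq_iff_hammingDist_U_eq
    (hj : (hammingDist x (U n j) + 1) / 2 = (hammingDist y (U n j) + 1) / 2)
    (hj' : (hammingDist x (U n (j + 1)) + 1) / 2 = (hammingDist y (U n (j + 1)) + 1) / 2) :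
    x j = y j ↔ hammingDist x (U n j) = hammingDist y (U n j) := by
  have hx := hammingDist_U_succ x j
  have hy := hammingDist_U_succ y j
  rcases zmod_two_eq_zero_or_one (x j) with h | h <;>
    rcases zmod_two_eq_zero_or_one (y j) with h' | h' <;> simp [h, h'] at hx hy ⊢ <;> omega

theorem apply_zero_ne_apply_one (hn : 2 < n)
    (H : ∀ i ≤ 2, (hammingDist x (U n i) + 1) / 2 = (hammingDist y (U n i) + 1) / 2)
    (h0 : hammingDist x (U n 0) ≠ hammingDist y (U n 0)) :
    x ⟨0, by omega⟩ ≠ x ⟨1, by omega⟩ := by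
  have hx₀ := hammingDist_U_succ x ⟨0, by omega⟩
  have hy₀ := hammingDist_U_succ y ⟨0, by omega⟩
  have hx₁ := hammingDist_U_succ x ⟨1, by omega⟩
  have hy₁ := hammingDist_U_succ y ⟨1, by omega⟩
  have := H 0 (by norm_num); have := H 1 (by norm_num); have := H 2 le_rfl
  rcases zmod_two_eq_zero_or_one (x ⟨0, by omega⟩) with h₁ | h₁ <;>
    rcases zmod_two_eq_zero_or_one (x ⟨1, by omega⟩) with h₂ | h₂ <;>
    rcases zmod_two_eq_zero_or_one (y ⟨0, by omega⟩) with h₃ | h₃ <;>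
    rcases zmod_two_eq_zero_or_one (y ⟨1, by omega⟩) with h₄ | h₄ <;>
    simp [h₁, h₂, h₃, h₄] at hx₀ hy₀ hx₁ hy₁ ⊢ <;> omega

end Profile

theorem Qsq.eq_or_forall_ne_of_dist_U_eq {n : ℕ} (hn : 2 < n) {x y : Fin n → ZMod 2}
    (H : ∀ i < n, (Qsq n).dist x (U n i) = (Qsq n).dist y (U n i)) :
    x = y ∨ x ⟨0, by omega⟩ ≠ x ⟨1, by omega⟩ ∧ ∀ j : Fin n, (j : ℕ) + 1 < n → x j ≠ y j := by
  simp only [Qsq.dist_eq] at H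
  by_cases h₀ : hammingDist x (U n 0) = hammingDist y (U n 0)
  · left
    have hn' : hammingDist x (U n n) = hammingDist y (U n n) := by
      have := hammingDist_U_zero_add_U_self x
      have := hammingDist_U_zero_add_U_self y
      omega
    have H' : ∀ i ≤ n, (hammingDist x (U n i) + 1) / 2 = (hammingDist y (U n i) + 1) / 2 := by
      intro i hi
      rcases hi.lt_or_eq with hi | rfl
      exacts [H i hi, by rw [hn']]
    have heq : ∀ i ≤ n, hammingDist x (U n i) = hammingDist y (U n i) := by
      intro i
      induction i with
      | zero => exact fun _ => h₀
      | succ i ih =>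
        intro hi
        exact (hammingDist_U_succ_eq_iff (j := ⟨i, hi⟩) (H' i (by omega)) (H' (i + 1) hi)).mpr
          (ih (by omega))
    funext j
    exact (apply_eq_iff_hammingDist_U_eq (H' j j.is_lt.le) (H' (j + 1) j.is_lt)).mpr
      (heq j j.is_lt.le)
  · right
    have hne : ∀ i < n, hammingDist x (U n i) ≠ hammingDist y (U n i) := by
      intro i
      induction i with
      | zero => exact fun _ => h₀
      | succ i ih =>
        intro hi
        exact (hammingDist_U_succ_eq_iff (j := ⟨i, by omega⟩) (H i (by omega))
          (H (i + 1) hi)).not.mpr (ih (by omega))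
    refine ⟨apply_zero_ne_apply_one hn (fun i hi => H i (by omega)) h₀, fun j hj => ?_⟩
    exact (apply_eq_iff_hammingDist_U_eq (H j j.is_lt) (H (j + 1) hj)).not.mpr (hne j j.is_lt)

theorem Qsq.exists_adj_three_le_hammingDist {n : ℕ} (hn : 3 < n) {v w : Fin n → ZMod 2}
    (hv : v ⟨0, by omega⟩ ≠ v ⟨1, by omega⟩) (hvw : ∀ j : Fin n, (j : ℕ) + 1 < n → v j ≠ w j) :
    ∃ u, (Qsq n).Adj u v ∧ u ⟨0, by omega⟩ = u ⟨1, by omega⟩ ∧ 3 ≤ hammingDist u w := by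
  set j₀ : Fin n := ⟨0, by omega⟩
  set j₁ : Fin n := ⟨1, by omega⟩
  set j₂ : Fin n := ⟨2, by omega⟩
  set jₗ : Fin n := ⟨n - 1, by omega⟩
  have h₀₁ : j₀ ≠ j₁ := by simp [j₀, j₁, Fin.ext_iff]
  have h₀₂ : j₀ ≠ j₂ := by simp [j₀, j₂, Fin.ext_iff]
  have h₀ₗ : j₀ ≠ jₗ := by simp [j₀, jₗ, Fin.ext_iff]; omega
  have h₁₂ : j₁ ≠ j₂ := by simp [j₁, j₂, Fin.ext_iff]
  have h₁ₗ : j₁ ≠ jₗ := by simp [j₁, jₗ, Fin.ext_iff]; omega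
  have h₂ₗ : j₂ ≠ jₗ := by simp [j₂, jₗ, Fin.ext_iff]; omega
  set u := update (update v j₀ (v j₁)) jₗ (w jₗ + 1)
  have hu : ∀ j, j ≠ j₀ → j ≠ jₗ → u j = v j := fun j h h' => by
    simp [u, update_of_ne h, update_of_ne h']
  refine ⟨u, Qsq.adj_iff.mpr ⟨fun h => hv ?_, ?_⟩, ?_, ?_⟩
  · have hu₀ : u j₀ = v j₁ := by simp [u, update_of_ne h₀ₗ]
    rwa [h] at hu₀
  · rw [hammingDist_comm]
    linarith [hammingDist_triangle v (update v j₀ (v j₁)) u,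
      hammingDist_update_self_le_one v j₀ (v j₁),
      hammingDist_update_self_le_one (update v j₀ (v j₁)) jₗ (w jₗ + 1)]
  · simp [u, update_of_ne h₀ₗ, update_of_ne h₁ₗ, update_of_ne h₀₁.symm]
  · have hfar : #{j₁, j₂, jₗ} ≤ hammingDist u w := by
      refine card_le_hammingDist fun j hj => ?_
      simp only [mem_insert, mem_singleton] at hj
      rcases hj with rfl | rfl | rfl
      · rw [hu _ h₀₁.symm h₁ₗ]; exact hvw _ (by simp [j₁]; omega)
      · rw [hu _ h₀₂.symm h₂ₗ]; exact hvw _ (by simp [j₂]; omega)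
      · simp [u]
    rwa [card_eq_three.mpr ⟨_, _, _, h₁₂, h₁ₗ, h₂ₗ, rfl⟩] at hfar

theorem isDeterminingSet_U {n : ℕ} (hn : 3 < n) :
    IsDeterminingSet (Qsq n) {x | ∃ i < n, x = U n i} := by
  intro φ hφ
  have hprofile : ∀ v, ∀ i < n, (Qsq n).dist v (U n i) = (Qsq n).dist (φ v) (U n i) := by
    intro v i hi
    rw [← SimpleGraph.Iso.dist_map φ, hφ _ ⟨i, hi, rfl⟩]
  have hfix : ∀ v : Fin n → ZMod 2, v ⟨0, by omega⟩ = v ⟨1, by omega⟩ → φ v = v := fun v hv =>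
    ((Qsq.eq_or_forall_ne_of_dist_U_eq (by omega) (hprofile v)).resolve_right fun h => h.1 hv).symm
  intro v
  by_contra hv
  obtain ⟨hv₀₁, hvφv⟩ :=
    (Qsq.eq_or_forall_ne_of_dist_U_eq (by omega) (hprofile v)).resolve_left (Ne.symm hv)
  obtain ⟨u, hadj, hu₀₁, hfar⟩ := Qsq.exists_adj_three_le_hammingDist hn hv₀₁ hvφv
  have hnear := (Qsq.adj_iff.mp (φ.map_adj_iff.mpr hadj)).2
  rw [hfix u hu₀₁] at hnear
  omega

/-- For `n > 3`, `{U_0, …, U_{n-1}}` is a determining set for `Q_n^2`; hence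
`det(Q_n^2) ≤ n`. -/
theorem stmt4 (n : ℕ) (hn : 3 < n) :
    IsDeterminingSet (Qsq n) {x | ∃ i < n, x = U n i} ∧ detNum (Qsq n) ≤ n := by
  have hdet := isDeterminingSet_U hn
  have hS : {x | ∃ i < n, x = U n i} = U n '' Set.Iio n := by
    ext x
    simp [eq_comm]
  refine ⟨hdet, ?_⟩
  calc detNum (Qsq n) ≤ (U n '' Set.Iio n).ncard := Nat.sInf_le ⟨_, rfl, hS ▸ hdet⟩
    _ ≤ (Set.Iio n).ncard := Set.ncard_image_le (Set.finite_Iio n)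
    _ = n := Set.ncard_Iio_nat n
end

section
/- The determining number of the Hamming graph H(m,n) equals the smallest integer r such that n ≤ S(r,m) + S(r,m−1), where S(r,k) denotes the Stirling number of the second kind. -/
/-- The Hamming graph `H(m,n) = K_m^{□n}`: vertices `[m]^n`, adjacent iff they
differ in exactly one coordinate. -/
def Ham (m n : ℕ) : SimpleGraph (Fin n → Fin m) :=
  SimpleGraph.fromRel (fun x y => hammingDist x y = 1)

/-- Stirling numbers of the second kind. -/
def stirling2 : ℕ → ℕ → ℕ
  | 0, 0 => 1
  | 0, _ + 1 => 0
  | _ + 1, 0 => 0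
  | r + 1, k + 1 => (k + 1) * stirling2 r (k + 1) + stirling2 r k

/-!
An automorphism of `H(m,n)` maps the edges of direction `i` at every vertex to edges of one
direction `π i`, because opposite sides of a square stay parallel; hence it has the form
`x ↦ (π j ↦ σ j (x j))`. Writing a vertex set as the rows of a matrix with `n` columns, it is
determining exactly when every column takes at least `m - 1` values and no column arises from
another by relabelling `Fin m`. Columns up to relabelling are set partitions of the rows, encoded
by restricted growth strings, and those with `m` or `m - 1` blocks number `S(r,m) + S(r,m-1)`.
-/

open Finset Function

section HammingEdges

variable {ι α : Type*}

def AdjAt (i : ι) (x y : ι → α) : Prop := x i ≠ y i ∧ ∀ j, j ≠ i → x j = y j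

theorem AdjAt.symm {i : ι} {x y : ι → α} (h : AdjAt i x y) : AdjAt i y x :=
  ⟨h.1.symm, fun j hj => (h.2 j hj).symm⟩

theorem AdjAt.eq_of_adjAt {i j : ι} {x y : ι → α} (hi : AdjAt i x y) (hj : AdjAt j x y) :
    i = j :=
  by_contra fun h => hi.1 (hj.2 i h)

theorem adjAt_update [DecidableEq ι] {x : ι → α} {i : ι} {a : α} (ha : x i ≠ a) :
    AdjAt i x (update x i a) :=
  ⟨by simpa using ha, fun j hj => (update_of_ne hj a x).symm⟩

theorem apply_eq_of_forall_update_eq [Fintype ι] [DecidableEq ι] {β : Type*} {s : Set ι}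
    {f : (ι → α) → β} (hf : ∀ x i a, i ∉ s → f (update x i a) = f x) {x y : ι → α}
    (hxy : ∀ i ∈ s, x i = y i) : f x = f y := by
  suffices ∀ t : Finset ι, ∀ x, (∀ i ∈ s, x i = y i) → (∀ i ∉ t, x i = y i) →
      f x = f y from this univ x hxy (by simp)
  intro t
  induction t using Finset.induction_on with
  | empty => exact fun x _ h => congrArg f (funext fun i => h i (notMem_empty i))
  | insert a t _ ih =>
    intro x hs ht
    have hx : f (update x a (y a)) = f x := by
      by_cases ha : a ∈ s
      · rw [← hs a ha, update_eq_self]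
      · exact hf x a (y a) ha
    rw [← hx]
    refine ih _ (fun i hi => ?_) (fun i hi => ?_) <;> by_cases hia : i = a
    · simp [hia]
    · simpa [update_of_ne hia] using hs i hi
    · simp [hia]
    · simpa [update_of_ne hia] using ht i (by simp [hia, hi])

variable [Fintype ι] [DecidableEq α]

theorem hammingDist_eq_one_iff {x y : ι → α} : hammingDist x y = 1 ↔ ∃ i, AdjAt i x y := by
  simp only [hammingDist, card_eq_one, Finset.ext_iff, mem_filter, mem_univ, true_and,
    mem_singleton, AdjAt]
  refine exists_congr fun i => ⟨fun h => ⟨(h i).2 rfl, fun j hj => ?_⟩, fun h j => ?_⟩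
  · exact not_not.1 (mt (h j).1 hj)
  · exact ⟨fun hne => by_contra fun hji => hne (h.2 j hji), by rintro rfl; exact h.1⟩

theorem hammingDist_le_one_of_forall_ne {x y : ι → α} (i : ι)
    (h : ∀ j, j ≠ i → x j = y j) : hammingDist x y ≤ 1 :=
  calc hammingDist x y ≤ #{i} := card_le_card fun j hj =>
        mem_singleton.2 (by_contra fun hji => (mem_filter.1 hj).2 (h j hji))
    _ = 1 := card_singleton i

theorem two_le_hammingDist {x y : ι → α} {i j : ι} (hij : i ≠ j) (hi : x i ≠ y i)
    (hj : x j ≠ y j) : 2 ≤ hammingDist x y := by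
  classical
  calc 2 = #{i, j} := (card_pair hij).symm
    _ ≤ hammingDist x y := card_le_card <| by
        intro k hk
        rcases mem_insert.1 hk with rfl | hk
        · simpa using hi
        · simpa [mem_singleton.1 hk] using hj

theorem AdjAt.eq_of_hammingDist_le_one {i j : ι} {a b c : ι → α} (hb : AdjAt i a b)
    (hc : AdjAt j a c) (hbc : hammingDist b c ≤ 1) : i = j := by
  by_contra hij
  have := two_le_hammingDist hij (fun h => hb.1 ((hc.2 i hij).trans h.symm))
    (fun h => hc.1 ((hb.2 j (Ne.symm hij)).trans h))
  omega

theorem AdjAt.eq_of_square {p q p' q' : ι} {a b c d : ι → α} (hab : AdjAt p a b)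
    (hbc : AdjAt q b c) (had : AdjAt p' a d) (hdc : AdjAt q' d c) (hbd : b ≠ d)
    (hac : 2 ≤ hammingDist a c) : q = p' := by
  have hpq : p ≠ q := by
    rintro rfl
    have := hammingDist_le_one_of_forall_ne p fun j hj => (hab.2 j hj).trans (hbc.2 j hj)
    omega
  by_contra hqp'
  have hqq' : q = q' := by_contra fun hqq' =>
    hbc.1 ((hab.2 q hpq.symm).symm.trans ((had.2 q hqp').trans (hdc.2 q hqq')))
  have hpq' : p ≠ q' := hqq' ▸ hpq
  have hpp' : p = p' := by_contra fun hpp' =>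
    hab.1 (((had.2 p hpp').trans (hdc.2 p hpq')).trans (hbc.2 p hpq).symm)
  refine hbd (funext fun j => ?_)
  by_cases hj : j = p
  · subst hj
    exact (hbc.2 j hpq).trans (hdc.2 j hpq').symm
  · exact (hab.2 j hj).symm.trans (had.2 j (hpp' ▸ hj))

end HammingEdges

section AdjacencyPreserving

variable {ι α : Type*} [Fintype ι] [DecidableEq ι] [DecidableEq α] [Nontrivial α]
  {φ : (ι → α) ≃ (ι → α)}
  (hφ : ∀ x y, hammingDist (φ x) (φ y) = 1 ↔ hammingDist x y = 1)
include hφ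

omit [DecidableEq ι] [Nontrivial α] in
theorem hammingDist_apply_le_one_iff {x y : ι → α} :
    hammingDist (φ x) (φ y) ≤ 1 ↔ hammingDist x y ≤ 1 := by
  simp only [Nat.le_one_iff_eq_zero_or_eq_one, hammingDist_eq_zero, φ.injective.eq_iff, hφ]

omit [DecidableEq ι] [Nontrivial α] in
theorem exists_adjAt_apply {i : ι} {x y : ι → α} (h : AdjAt i x y) :
    ∃ k, AdjAt k (φ x) (φ y) :=
  hammingDist_eq_one_iff.1 ((hφ x y).2 (hammingDist_eq_one_iff.2 ⟨i, h⟩))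

/-- The direction of the image under `φ` of an edge of direction `i` at `x`. -/
noncomputable def imageDir (x : ι → α) (i : ι) : ι :=
  (exists_adjAt_apply hφ (adjAt_update (exists_ne (x i)).choose_spec.symm)).choose

theorem adjAt_imageDir {i : ι} {x y : ι → α} (h : AdjAt i x y) :
    AdjAt (imageDir hφ x i) (φ x) (φ y) := by
  set a := (exists_ne (x i)).choose
  have h₀ : AdjAt (imageDir hφ x i) (φ x) (φ (update x i a)) :=
    (exists_adjAt_apply hφ (adjAt_update (exists_ne (x i)).choose_spec.symm)).choose_spec
  obtain ⟨k, hk⟩ := exists_adjAt_apply hφ h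
  have hle : hammingDist (φ y) (φ (update x i a)) ≤ 1 :=
    (hammingDist_apply_le_one_iff hφ).2 <| hammingDist_le_one_of_forall_ne i fun j hj => by
      rw [update_of_ne hj]
      exact (h.2 j hj).symm
  rwa [hk.eq_of_hammingDist_le_one h₀ hle] at hk

theorem imageDir_eq_of_adjAt {i₀ : ι} {x y : ι → α} (h : AdjAt i₀ x y) :
    imageDir hφ x = imageDir hφ y := by
  funext i
  by_cases hi : i = i₀
  · subst hi
    exact (adjAt_imageDir hφ h).symm.eq_of_adjAt (adjAt_imageDir hφ h.symm)
  -- the edges of direction `i` at `x` and at `y` are opposite sides of a square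
  obtain ⟨a, ha⟩ := exists_ne (y i)
  have hxy : x i = y i := h.2 i hi
  have hyz : AdjAt i y (update y i a) := adjAt_update ha.symm
  have hxw : AdjAt i x (update x i a) := adjAt_update (hxy ▸ ha.symm)
  have hwz : AdjAt i₀ (update x i a) (update y i a) := by
    refine ⟨by simpa [update_of_ne (Ne.symm hi)] using h.1, fun j hj => ?_⟩
    by_cases hji : j = i
    · simp [hji]
    · simp [update_of_ne hji, h.2 j hj]
  have hxz : 2 ≤ hammingDist (φ x) (φ (update y i a)) := by
    have : 2 ≤ hammingDist x (update y i a) :=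
      two_le_hammingDist hi (by simpa [hxy] using ha.symm)
        (by simpa [update_of_ne (Ne.symm hi)] using h.1)
    by_contra hlt
    have := (hammingDist_apply_le_one_iff hφ).1 (Nat.le_of_lt_succ (not_le.1 hlt))
    omega
  have hyw : φ y ≠ φ (update x i a) := φ.injective.ne fun he =>
    h.1 (by simpa [update_of_ne (Ne.symm hi)] using (congrFun he i₀).symm)
  obtain ⟨p, hp⟩ := exists_adjAt_apply hφ h
  obtain ⟨q, hq⟩ := exists_adjAt_apply hφ hwz
  exact (hp.eq_of_square (adjAt_imageDir hφ hyz) (adjAt_imageDir hφ hxw) hq hyw hxz).symm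

theorem imageDir_eq (x y : ι → α) : imageDir hφ x = imageDir hφ y := by
  refine apply_eq_of_forall_update_eq (s := ∅) (fun x i a _ => ?_) (by simp)
  by_cases ha : x i = a
  · rw [← ha, update_eq_self]
  · exact (imageDir_eq_of_adjAt hφ (adjAt_update ha)).symm

theorem imageDir_injective (x : ι → α) : Injective (imageDir hφ x) := by
  intro i i' h
  by_contra hii'
  obtain ⟨a, ha⟩ := exists_ne (x i)
  obtain ⟨b, hb⟩ := exists_ne (x i')
  have h₁ := adjAt_imageDir hφ (adjAt_update ha.symm)
  have h₂ := adjAt_imageDir hφ (adjAt_update hb.symm)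
  rw [h] at h₁
  have hle := hammingDist_le_one_of_forall_ne (imageDir hφ x i') fun j hj =>
    (h₁.2 j hj).symm.trans (h₂.2 j hj)
  rw [hammingDist_apply_le_one_iff hφ] at hle
  have := two_le_hammingDist hii' (x := update x i a) (y := update x i' b)
    (by simpa [update_of_ne hii'] using ha) (by simpa [update_of_ne (Ne.symm hii')] using hb.symm)
  omega

theorem exists_perm_apply_eq :
    ∃ π : Equiv.Perm ι, ∃ σ : ι → α → α,
      (∀ j, Injective (σ j)) ∧ ∀ x j, φ x (π j) = σ j (x j) := by
  obtain ⟨x₀⟩ : Nonempty (ι → α) := inferInstance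
  let π := Equiv.ofBijective (imageDir hφ x₀)
    (Finite.injective_iff_bijective.1 (imageDir_injective hφ x₀))
  have hπ {i : ι} {x y : ι → α} (h : AdjAt i x y) : AdjAt (π i) (φ x) (φ y) := by
    simpa [π, imageDir_eq hφ x₀ x] using adjAt_imageDir hφ h
  have hcoord (j : ι) {x y : ι → α} (h : x j = y j) : φ x (π j) = φ y (π j) := by
    refine apply_eq_of_forall_update_eq (s := {j}) (f := fun x => φ x (π j))
      (fun x i a hi => ?_) (by simpa using h)
    by_cases ha : x i = a
    · rw [← ha, update_eq_self]
    · exact ((hπ (adjAt_update ha)).2 (π j) (π.injective.ne (Ne.symm hi))).symm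
  refine ⟨π, fun j a => φ (update x₀ j a) (π j), fun j a b hab => ?_,
    fun x j => hcoord j (by simp)⟩
  by_contra hne
  have : AdjAt j (update x₀ j a) (update x₀ j b) :=
    ⟨by simpa using hne, fun k hk => by simp [update_of_ne hk]⟩
  exact (hπ this).1 hab

end AdjacencyPreserving

theorem Function.Injective.eq_id_of_card_compl_le_one {β : Type*} [Fintype β] [DecidableEq β]
    {g : β → β} (hg : Injective g) {s : Finset β} (hs : #sᶜ ≤ 1)
    (hfix : ∀ a ∈ s, g a = a) :
    g = id := by
  funext a
  by_contra hne
  have ha : a ∉ s := fun h => hne (hfix a h)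
  have hga : g a ∉ s := fun h => ha (hg (hfix (g a) h) ▸ h)
  have := card_le_card (s := {a, g a}) (t := sᶜ) (by simp [insert_subset_iff, ha, hga])
  rw [card_pair (show a ≠ g a from fun h => hne h.symm)] at this
  omega

namespace Ham

variable {m n : ℕ}

theorem adj_iff {x y : Fin n → Fin m} : (Ham m n).Adj x y ↔ hammingDist x y = 1 := by
  rw [Ham, SimpleGraph.fromRel_adj, hammingDist_comm y x, or_self, and_iff_right_iff_imp]
  rintro h rfl
  simp at h

theorem hammingDist_apply_eq_one_iff (φ : Ham m n ≃g Ham m n) (x y : Fin n → Fin m) :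
    hammingDist (φ x) (φ y) = 1 ↔ hammingDist x y = 1 := by
  rw [← adj_iff, ← adj_iff, φ.map_adj_iff]

def wreathAut (π : Equiv.Perm (Fin n)) (σ : Fin n → Equiv.Perm (Fin m)) :
    Ham m n ≃g Ham m n where
  toEquiv := (π.symm.arrowCongr (Equiv.refl _)).trans (Equiv.piCongrRight σ)
  map_rel_iff' {x y} := by
    change (Ham m n).Adj (fun j => σ j (x (π j))) (fun j => σ j (y (π j))) ↔ _
    have hπ : hammingDist (x ∘ π) (y ∘ π) = hammingDist x y := card_equiv π (by simp)
    rw [adj_iff, adj_iff, hammingDist_comp (fun j => ⇑(σ j)) fun j => (σ j).injective, ← hπ]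
    rfl

theorem wreathAut_apply (π : Equiv.Perm (Fin n)) (σ : Fin n → Equiv.Perm (Fin m))
    (x : Fin n → Fin m) (j : Fin n) : wreathAut π σ x j = σ j (x (π j)) := rfl

variable {κ : Type*} {X : κ → Fin n → Fin m}

theorem eq_of_perm_comp_eq_of_isDeterminingSet (hm : 2 ≤ m)
    (hX : IsDeterminingSet (Ham m n) (Set.range X)) {j k : Fin n} (τ : Equiv.Perm (Fin m))
    (hτ : τ ∘ swap X j = swap X k) : j = k := by
  by_contra hjk
  -- swapping the coordinates `j` and `k` while relabelling them by `τ` fixes every `X i`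
  have hfix := hX (wreathAut (Equiv.swap j k) (Pi.mulSingle j τ⁻¹ * Pi.mulSingle k τ))
    (by
      rintro _ ⟨i, rfl⟩
      funext l
      have hi := congrFun hτ i
      simp only [comp_apply, swap] at hi
      rw [wreathAut_apply]
      by_cases hlj : l = j
      · subst hlj
        simp [hjk, ← hi]
      by_cases hlk : l = k
      · subst hlk
        simp [Ne.symm hjk, hi]
      · simp [hlj, hlk, Equiv.swap_apply_of_ne_of_ne hlj hlk])
  have : Nontrivial (Fin m) := Fin.nontrivial_iff_two_le.2 hm
  obtain ⟨a⟩ : Nonempty (Fin m) := inferInstance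
  obtain ⟨b, hb⟩ := exists_ne (τ a)
  have := congrFun (hfix (update (fun _ => a) k b)) k
  simp [wreathAut_apply, hjk, Ne.symm hjk] at this
  exact hb this.symm

variable [Fintype κ]

theorem card_compl_image_le_one_of_isDeterminingSet
    (hX : IsDeterminingSet (Ham m n) (Set.range X)) (j : Fin n) :
    #(univ.image (swap X j))ᶜ ≤ 1 := by
  by_contra! h
  obtain ⟨a, ha, b, hb, hab⟩ := one_lt_card.1 h
  simp only [mem_compl, mem_image, mem_univ, true_and, not_exists] at ha hb
  have hfix := hX (wreathAut 1 (Pi.mulSingle j (Equiv.swap a b)))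
    (by
      rintro _ ⟨i, rfl⟩
      funext l
      rw [wreathAut_apply]
      by_cases hl : l = j
      · subst hl
        simpa using Equiv.swap_apply_of_ne_of_ne (ha i) (hb i)
      · simp [hl])
    (fun _ => a)
  have := congrFun hfix j
  simp [wreathAut_apply] at this
  exact hab this.symm

theorem isDeterminingSet_of_columns (hm : 2 ≤ m)
    (hcard : ∀ j, #(univ.image (swap X j))ᶜ ≤ 1)
    (hcol : ∀ j k (τ : Equiv.Perm (Fin m)), τ ∘ swap X j = swap X k → j = k) :
    IsDeterminingSet (Ham m n) (Set.range X) := by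
  have : Nontrivial (Fin m) := Fin.nontrivial_iff_two_le.2 hm
  intro φ hφ
  obtain ⟨π, σ, hσ, hφσ⟩ :=
    exists_perm_apply_eq (φ := φ.toEquiv) (hammingDist_apply_eq_one_iff φ)
  have hcolumn (j : Fin n) : σ j ∘ swap X j = swap X (π j) := by
    funext i
    have := hφσ (X i) j
    rw [show φ.toEquiv (X i) = X i from hφ _ ⟨i, rfl⟩] at this
    exact this.symm
  have hπ (j : Fin n) : π j = j :=
    (hcol j (π j) (.ofBijective _ (Finite.injective_iff_bijective.1 (hσ j))) (hcolumn j)).symm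
  have hσ_id (j : Fin n) : σ j = id := by
    refine (hσ j).eq_id_of_card_compl_le_one (hcard j) ?_
    simp only [mem_image, mem_univ, true_and]
    rintro _ ⟨i, rfl⟩
    simpa [hπ j] using congrFun (hcolumn j) i
  intro v
  funext j
  simpa [hπ j, hσ_id j] using hφσ v j

theorem isDeterminingSet_range_iff (hm : 2 ≤ m) :
    IsDeterminingSet (Ham m n) (Set.range X) ↔ (∀ j, #(univ.image (swap X j))ᶜ ≤ 1) ∧
      ∀ j k (τ : Equiv.Perm (Fin m)), τ ∘ swap X j = swap X k → j = k :=
  ⟨fun hX => ⟨card_compl_image_le_one_of_isDeterminingSet hX,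
    fun _ _ => eq_of_perm_comp_eq_of_isDeterminingSet hm hX⟩,
    fun h => isDeterminingSet_of_columns hm h.1 h.2⟩

end Ham

section RestrictedGrowth

variable {r m : ℕ}

/-- Restricted growth strings, the canonical representatives of maps `Fin r → Fin m` modulo
permutations of `Fin m`. -/
def IsRGS (c : Fin r → Fin m) : Prop := ∀ i, ∀ v < c i, ∃ i' < i, c i' = v

instance : DecidablePred (IsRGS : (Fin r → Fin m) → Prop) := fun c => by
  unfold IsRGS
  infer_instance

def numValues {κ : Type*} [Fintype κ] (c : κ → Fin m) : ℕ := #(univ.image c)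

theorem card_compl_image_le_one_iff {κ : Type*} [Fintype κ] (c : κ → Fin m) :
    #(univ.image c)ᶜ ≤ 1 ↔ m - 1 ≤ numValues c := by
  rw [card_compl, Fintype.card_fin, numValues]
  omega

theorem numValues_le {κ : Type*} [Fintype κ] (c : κ → Fin m) : numValues c ≤ m :=
  (card_le_univ _).trans_eq (Fintype.card_fin m)

theorem numValues_comp_of_injective {κ : Type*} [Fintype κ] {g : Fin m → Fin m}
    (hg : Injective g) (c : κ → Fin m) :
    numValues (g ∘ c) = numValues c := by
  rw [numValues, numValues, ← image_image, card_image_of_injective _ hg]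

theorem IsRGS.mem_image_iff {c : Fin r → Fin m} (hc : IsRGS c) {v : Fin m} :
    v ∈ univ.image c ↔ (v : ℕ) < numValues c := by
  have hlower {v w : Fin m} (hv : v ∈ univ.image c) (hwv : w < v) : w ∈ univ.image c := by
    obtain ⟨i, -, rfl⟩ := mem_image.1 hv
    obtain ⟨i', -, rfl⟩ := hc i w hwv
    exact mem_image_of_mem c (mem_univ i')
  constructor
  · intro hv
    have := card_le_card (s := Iic v) fun w hw =>
      (mem_Iic.1 hw).lt_or_eq.elim (hlower hv) (· ▸ hv)
    rw [Fin.card_Iic] at this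
    exact this
  · intro hv
    by_contra hnv
    have := card_le_card (s := univ.image c) (t := Iio v) fun w hw =>
      mem_Iio.2 (lt_of_not_ge fun hvw => hnv ((hvw.lt_or_eq).elim (hlower hw) (· ▸ hw)))
    rw [Fin.card_Iio] at this
    exact absurd hv (not_lt.2 this)

theorem numValues_snoc {c : Fin r → Fin m} (hc : IsRGS c) (a : Fin m) :
    numValues (Fin.snoc c a : Fin (r + 1) → Fin m) =
      if (a : ℕ) < numValues c then numValues c else numValues c + 1 := by
  have : univ.image (Fin.snoc c a : Fin (r + 1) → Fin m) = insert a (univ.image c) := by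
    ext v
    simp [Fin.exists_fin_succ', or_comm, eq_comm]
  rw [numValues, this, card_insert_eq_ite]
  exact if_congr hc.mem_image_iff rfl rfl

theorem isRGS_snoc_iff {c : Fin r → Fin m} {a : Fin m} :
    IsRGS (Fin.snoc c a : Fin (r + 1) → Fin m) ↔ IsRGS c ∧ (a : ℕ) ≤ numValues c := by
  simp only [IsRGS, Fin.forall_fin_succ', Fin.exists_fin_succ', Fin.snoc_castSucc, Fin.snoc_last,
    Fin.castSucc_lt_castSucc_iff, Fin.castSucc_lt_last, true_and, lt_irrefl, false_and, or_false,
    not_lt_of_gt (Fin.castSucc_lt_last _)]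
  refine and_congr_right fun hc => ⟨fun h => ?_, fun h v hv => ?_⟩
  · by_contra! hlt
    obtain ⟨i, hi⟩ := h ⟨numValues c, hlt.trans a.isLt⟩ hlt
    exact lt_irrefl _ ((IsRGS.mem_image_iff hc).1 (hi ▸ mem_image_of_mem c (mem_univ i)))
  · obtain ⟨i, -, hi⟩ := mem_image.1 ((IsRGS.mem_image_iff hc).2 (lt_of_lt_of_le hv h))
    exact ⟨i, hi⟩

theorem card_isRGS_numValues_eq (r : ℕ) {k : ℕ} (hk : k ≤ m) :
    #{c : Fin r → Fin m | IsRGS c ∧ numValues c = k} = stirling2 r k := by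
  induction r generalizing k with
  | zero => cases k <;> simp [IsRGS, numValues, stirling2]
  | succ r ih =>
    cases k with
    | zero =>
      simp only [stirling2, card_eq_zero, filter_eq_empty_iff, mem_univ, true_implies, not_and]
      intro c _ h
      exact (univ_nonempty.image c).card_ne_zero h
    | succ k =>
      -- split off the last letter: it either repeats an earlier value or is the new value `k`
      let K : Fin m := ⟨k, hk⟩
      have hsplit :
          #(({c : Fin r → Fin m | IsRGS c ∧ numValues c = k + 1} : Finset _) ×ˢ Iic K ∪
            ({c : Fin r → Fin m | IsRGS c ∧ numValues c = k} : Finset _) ×ˢ {K}) =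
          #{c : Fin (r + 1) → Fin m | IsRGS c ∧ numValues c = k + 1} := by
        refine card_equiv ((Equiv.prodComm _ _).trans (Fin.snocEquiv fun _ => Fin m)) ?_
        rintro ⟨c, a⟩
        change _ ↔ (Fin.snoc c a : Fin (r + 1) → Fin m) ∈ _
        simp only [mem_union, mem_product, mem_filter, mem_univ, true_and, mem_Iic,
          mem_singleton, isRGS_snoc_iff, Fin.le_def, Fin.ext_iff, K]
        by_cases hc : IsRGS c
        · rw [numValues_snoc hc]
          simp only [hc, true_and]
          split_ifs <;> omega
        · simp [hc]
      rw [← hsplit, card_union_of_disjoint, card_product, card_product, ih hk,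
        ih (Nat.le_of_succ_le hk), Fin.card_Iic, card_singleton, stirling2]
      · ring
      · refine disjoint_left.2 fun p h₁ h₂ => ?_
        simp only [mem_product, mem_filter, mem_univ, true_and] at h₁ h₂
        omega

theorem card_isRGS_pred_le_numValues (r : ℕ) (hm : 1 ≤ m) :
    #{c : Fin r → Fin m | IsRGS c ∧ m - 1 ≤ numValues c} =
      stirling2 r m + stirling2 r (m - 1) := by
  have : ({c : Fin r → Fin m | IsRGS c ∧ m - 1 ≤ numValues c} : Finset _) =
      ({c | IsRGS c ∧ numValues c = m} : Finset _) ∪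
        ({c | IsRGS c ∧ numValues c = m - 1} : Finset _) := by
    ext c
    have := numValues_le c
    simp only [mem_filter, mem_univ, true_and, mem_union, ← and_or_left]
    exact and_congr_right fun _ => by omega
  rw [this, card_union_of_disjoint, card_isRGS_numValues_eq r le_rfl,
    card_isRGS_numValues_eq r (Nat.sub_le m 1)]
  simp only [disjoint_left, mem_filter, mem_univ, true_and, not_and]
  intro c _ h _
  omega

theorem exists_perm_isRGS_comp (c : Fin r → Fin m) :
    ∃ σ : Equiv.Perm (Fin m), IsRGS (σ ∘ c) := by
  induction r with
  | zero => exact ⟨1, fun i => i.elim0⟩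
  | succ r ih =>
    obtain ⟨σ, hσ⟩ := ih (Fin.init c)
    set d := σ ∘ Fin.init c
    set b := σ (c (Fin.last r))
    have hc : σ ∘ c = Fin.snoc d b := by
      conv_lhs => rw [← Fin.snoc_init_self c]
      exact Fin.comp_snoc _ _ _
    by_cases hb : (b : ℕ) ≤ numValues d
    · exact ⟨σ, hc ▸ isRGS_snoc_iff.2 ⟨hσ, hb⟩⟩
    -- otherwise the last letter is relabelled to the first unused value
    let K : Fin m := ⟨numValues d, by omega⟩
    have hd : Equiv.swap b K ∘ d = d := funext fun i => by
      have := (hσ.mem_image_iff (v := d i)).1 (mem_image_of_mem d (mem_univ i))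
      exact Equiv.swap_apply_of_ne_of_ne (fun h => by rw [h] at this; omega)
        (fun h => by rw [h] at this; exact lt_irrefl _ this)
    refine ⟨σ.trans (Equiv.swap b K), ?_⟩
    rw [Equiv.coe_trans, comp_assoc, hc, Fin.comp_snoc, hd, Equiv.swap_apply_left]
    exact isRGS_snoc_iff.2 ⟨hσ, le_rfl⟩

theorem IsRGS.eq_of_comp_eq {c c' : Fin r → Fin m} (hc : IsRGS c) (hc' : IsRGS c')
    {g : Fin m → Fin m} (hg : Injective g) (h : g ∘ c = c') : c = c' := by
  have hg' (i : Fin r) : g (c i) = c' i := congrFun h i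
  funext i
  induction i using WellFoundedLT.induction with
  | ind i ih =>
    rcases lt_trichotomy (c' i) (c i) with hlt | heq | hlt
    · obtain ⟨i', hi', hci'⟩ := hc i _ hlt
      have : c i' = c i := hg <| calc
        g (c i') = c' i' := hg' i'
        _ = c i' := (ih i' hi').symm
        _ = c' i := hci'
        _ = g (c i) := (hg' i).symm
      exact absurd (hci'.symm.trans this) hlt.ne
    · exact heq.symm
    · obtain ⟨i', hi', hci'⟩ := hc' i _ hlt
      have : c' i' = c' i := calc
        c' i' = g (c i') := (hg' i').symm
        _ = g (c i) := by rw [ih i' hi', hci']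
        _ = c' i := hg' i
      exact absurd (hci'.symm.trans this) hlt.ne

end RestrictedGrowth

namespace Ham

variable {m n : ℕ}

theorem le_stirling2_add_of_isDeterminingSet (hm : 2 ≤ m) {S : Set (Fin n → Fin m)}
    (hS : IsDeterminingSet (Ham m n) S) :
    n ≤ stirling2 S.ncard m + stirling2 S.ncard (m - 1) := by
  let e := Finite.equivFinOfCardEq (Nat.card_coe_set_eq S)
  let X : Fin S.ncard → Fin n → Fin m := fun i => e.symm i
  have hX : Set.range X = S := by
    change Set.range (Subtype.val ∘ e.symm) = S
    rw [Set.range_comp, e.symm.surjective.range_eq, Set.image_univ, Subtype.range_coe]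
  rw [← hX, isDeterminingSet_range_iff hm] at hS
  choose σ hσ using fun j => exists_perm_isRGS_comp (swap X j)
  rw [← card_isRGS_pred_le_numValues _ (by omega)]
  refine (card_le_card_of_injOn (s := univ) (fun j => σ j ∘ swap X j) (fun j _ => ?_)
    fun j _ k _ hjk => ?_).trans_eq' (card_fin n)
  · refine mem_filter.2 ⟨mem_univ _, hσ j, ?_⟩
    rw [numValues_comp_of_injective (σ j).injective, ← card_compl_image_le_one_iff]
    exact hS.1 j
  · refine hS.2 j k ((σ k).symm * σ j) ?_
    rw [Equiv.Perm.coe_mul, comp_assoc]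
    exact (Equiv.symm_comp_eq _ _ _).2 hjk

theorem exists_isDeterminingSet_ncard_le (hm : 2 ≤ m) {r : ℕ}
    (hr : n ≤ stirling2 r m + stirling2 r (m - 1)) :
    ∃ S : Set (Fin n → Fin m), S.ncard ≤ r ∧ IsDeterminingSet (Ham m n) S := by
  rw [← card_isRGS_pred_le_numValues _ (by omega), ← Fintype.card_coe,
    ← Fintype.card_fin n] at hr
  obtain ⟨E⟩ := Function.Embedding.nonempty_of_card_le hr
  let X : Fin r → Fin n → Fin m := fun i j => (E j).1 i
  have hE (j : Fin n) : IsRGS (swap X j) ∧ m - 1 ≤ numValues (swap X j) := by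
    simpa using (E j).2
  refine ⟨Set.range X, ?_,
    (isDeterminingSet_range_iff hm).2 ⟨fun j => ?_, fun j k τ h => ?_⟩⟩
  · rw [← Set.image_univ]
    exact (Set.ncard_image_le Set.finite_univ).trans (by simp)
  · exact (card_compl_image_le_one_iff _).2 (hE j).2
  · exact E.injective (Subtype.ext ((hE j).1.eq_of_comp_eq (hE k).1 τ.injective h))

end Ham

theorem sInf_eq_sInf_of_subset_of_forall_exists_le {A B : Set ℕ} (hA : A.Nonempty)
    (hAB : A ⊆ B) (hBA : ∀ b ∈ B, ∃ a ∈ A, a ≤ b) : sInf A = sInf B := by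
  obtain ⟨a, ha, hab⟩ := hBA _ (Nat.sInf_mem (hA.mono hAB))
  exact le_antisymm ((Nat.sInf_le ha).trans hab) (Nat.sInf_le (hAB (Nat.sInf_mem hA)))

theorem stmt6_general (m n : ℕ) (hm : 2 ≤ m) :
    detNum (Ham m n) = sInf {r | n ≤ stirling2 r m + stirling2 r (m - 1)} := by
  refine sInf_eq_sInf_of_subset_of_forall_exists_le
    ⟨_, Set.univ, rfl, fun _ h v => h v trivial⟩ ?_ fun r hr => ?_
  · rintro _ ⟨S, rfl, hS⟩
    exact Ham.le_stirling2_add_of_isDeterminingSet hm hS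
  · obtain ⟨S, hSr, hS⟩ := Ham.exists_isDeterminingSet_ncard_le hm hr
    exact ⟨S.ncard, ⟨S, rfl, hS⟩, hSr⟩

/-- `det(H(m,n))` is the smallest `r` such that `n ≤ S(r,m) + S(r,m-1)`. -/
theorem stmt6 (m n : ℕ) (hm : 2 ≤ m) (hn : 1 ≤ n) :
    detNum (Ham m n) = sInf {r | n ≤ stirling2 r m + stirling2 r (m - 1)} :=
  stmt6_general m n hm
end

section
/- For n ≥ 4, if S is a determining set for the folded hypercube FQ_n, then for every position i ∈ [n] there exists a vertex v ∈ S with v_i = 1. -/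
/-- The folded hypercube `FQ_n`: binary `n`-vectors, adjacent iff their Hamming
distance is 1 or `n`. -/
def FQ (n : ℕ) : SimpleGraph (Fin n → ZMod 2) :=
  SimpleGraph.fromRel (fun x y => hammingDist x y = 1 ∨ hammingDist x y = n)

/-!
Let `ψᵢ` be the linear map of `(ZMod 2)ⁿ` exchanging `eᵢ` and the all-ones vector `𝟙`, i.e.
`ψᵢ x = x + xᵢ (eᵢ + 𝟙)`. It preserves Hamming distance between vertices agreeing at `i` and sends
distance `d` to `n + 1 - d` otherwise, so it is an automorphism of `FQ n`. It fixes every vertex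
with `xᵢ = 0` but moves `eᵢ` to `𝟙`, so a determining set must contain a vertex with `xᵢ = 1`.
-/

namespace FoldedHypercube

variable {n : ℕ}

def swapBasisOnes (i : Fin n) (x : Fin n → ZMod 2) : Fin n → ZMod 2 :=
  fun j => if j = i then x j else x j + x i

theorem swapBasisOnes_involutive (i : Fin n) : Function.Involutive (swapBasisOnes i) := by
  intro x
  funext j
  by_cases hj : j = i <;> simp [swapBasisOnes, hj, add_assoc, CharTwo.add_self_eq_zero]

theorem swapBasisOnes_of_apply_eq_zero {i : Fin n} {x : Fin n → ZMod 2} (hx : x i = 0) :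
    swapBasisOnes i x = x := by
  funext j
  by_cases hj : j = i <;> simp [swapBasisOnes, hj, hx]

theorem swapBasisOnes_single (i : Fin n) : swapBasisOnes i (Pi.single i 1) = 1 := by
  funext j
  by_cases hj : j = i <;> simp [swapBasisOnes, hj]

theorem hammingDist_swapBasisOnes_of_eq {i : Fin n} {x y : Fin n → ZMod 2} (h : x i = y i) :
    hammingDist (swapBasisOnes i x) (swapBasisOnes i y) = hammingDist x y := by
  unfold hammingDist
  congr 1
  ext j
  by_cases hj : j = i <;> simp [swapBasisOnes, hj, h]

theorem hammingDist_swapBasisOnes_add_of_ne {i : Fin n} {x y : Fin n → ZMod 2} (h : x i ≠ y i) :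
    hammingDist (swapBasisOnes i x) (swapBasisOnes i y) + hammingDist x y = n + 1 := by
  have hdiff : (Finset.univ.filter fun j => swapBasisOnes i x j ≠ swapBasisOnes i y j) =
      insert i (Finset.univ.filter fun j => x j = y j) := by
    ext j
    simp only [Finset.mem_insert, Finset.mem_filter, Finset.mem_univ, true_and]
    by_cases hj : j = i
    · simp [swapBasisOnes, hj, h]
    · have key : ∀ a b c d : ZMod 2, c ≠ d → (a + c ≠ b + d ↔ a = b) := by decide
      simp [swapBasisOnes, hj, key _ _ _ _ h]
  have hsplit := Finset.card_filter_add_card_filter_not (s := Finset.univ) (fun j => x j = y j)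
  rw [Finset.card_univ, Fintype.card_fin] at hsplit
  rw [hammingDist, hdiff, Finset.card_insert_of_notMem (by simp [h]), hammingDist]
  simp only [ne_eq] at hsplit ⊢
  omega

theorem adj_swapBasisOnes {i : Fin n} {x y : Fin n → ZMod 2} (h : (FQ n).Adj x y) :
    (FQ n).Adj (swapBasisOnes i x) (swapBasisOnes i y) := by
  simp only [FQ, SimpleGraph.fromRel_adj, hammingDist_comm (swapBasisOnes i y), hammingDist_comm y,
    or_self] at h ⊢
  obtain ⟨hne, hd⟩ := h
  refine ⟨(swapBasisOnes_involutive i).injective.ne hne, ?_⟩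
  by_cases hi : x i = y i
  · rwa [hammingDist_swapBasisOnes_of_eq hi]
  · have hsum := hammingDist_swapBasisOnes_add_of_ne hi
    have hpos := hammingDist_pos.mpr hne
    omega

def swapBasisOnesIso (i : Fin n) : FQ n ≃g FQ n where
  toEquiv := (swapBasisOnes_involutive i).toPerm
  map_rel_iff' {x y} := by
    refine ⟨fun h => ?_, adj_swapBasisOnes⟩
    simpa only [Function.Involutive.coe_toPerm, swapBasisOnes_involutive i _] using
      adj_swapBasisOnes (i := i) h

end FoldedHypercube

open FoldedHypercube in
/-- For `n ≥ 4`, if `S` is a determining set for `FQ_n`, then for each position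
`i` some vertex of `S` has a 1 in position `i`. -/
theorem stmt9 (n : ℕ) (hn : 4 ≤ n) (S : Set (Fin n → ZMod 2))
    (hS : IsDeterminingSet (FQ n) S) : ∀ i : Fin n, ∃ v ∈ S, v i = 1 := by
  intro i
  by_contra! hS0
  have hfix : ∀ v ∈ S, swapBasisOnesIso i v = v := fun v hv =>
    swapBasisOnes_of_apply_eq_zero <| by
      have key : ∀ a : ZMod 2, a ≠ 1 → a = 0 := by decide
      exact key _ (hS0 v hv)
  have : Nontrivial (Fin n) := Fin.nontrivial_iff_two_le.mpr (by omega)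
  obtain ⟨j, hj⟩ := exists_ne i
  have hsingle := congr_fun (hS _ hfix (Pi.single i 1)) j
  simp [swapBasisOnesIso, swapBasisOnes_single, hj] at hsingle
end

section
/- For n ≥ 4, the determining number of the folded hypercube satisfies ⌈lg(n+1)⌉ + 1 ≤ det(FQ_n) ≤ ⌈lg n⌉ + 2, where lg denotes base-2 logarithm. -/
/-!
Identify `Fin n → ZMod 2` with `(ZMod 2)^(n+1) / ⟨1⟩` by padding a vector with a last
coordinate `0`. Then `FQ n` is the Cayley graph whose generators are the images `gen p` of the
`n + 1` unit vectors, and `S_{n+1}` acts on it by permuting coordinates.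

Lower bound: if `|S| ≤ ⌈lg (n+1)⌉`, translate some `v₀ ∈ S` to `0`; the other vertices of `S`
give each of the `n + 1` coordinates a column in `(ZMod 2)^(|S| - 1)`, two columns coincide, and
the transposition of those coordinates, conjugated by the translation, is a nontrivial
automorphism fixing `S`.

Upper bound: for `n ≥ 4` two vertices at distance 2 have exactly two common neighbours, so an
automorphism fixing `0` is determined (by induction on the weight) by the permutation `σ` it
induces on the generators. Fixing `1` forces `σ` to fix the extra coordinate, and fixing the
`⌈lg n⌉` vectors whose `i`-th entry is bit `k` of `i` separates the other coordinates.
-/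

lemma zmod_two_ne_zero_iff : ∀ a : ZMod 2, a ≠ 0 ↔ a = 1 := by decide

lemma zmod_two_ne_one_iff : ∀ a : ZMod 2, a ≠ 1 ↔ a = 0 := by decide

lemma ZModModule.eq_add_iff_add_eq {G : Type*} [AddCommGroup G] [Module (ZMod 2) G]
    {x y z : G} : y = x + z ↔ x + y = z := by
  constructor <;> rintro rfl <;> rw [← add_assoc, ZModModule.add_self, zero_add]

lemma Function.comp_swap_eq_self {α β : Type*} [DecidableEq α] {f : α → β} {p q : α}
    (h : f p = f q) : f ∘ Equiv.swap p q = f := by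
  rw [Equiv.comp_swap_eq_update, h, Function.update_eq_self, ← h, Function.update_eq_self]

lemma Pi.single_one_ne_one {ι R : Type*} [DecidableEq ι] [Nontrivial ι] [MulZeroOneClass R]
    [Nontrivial R] (i : ι) : (Pi.single i 1 : ι → R) ≠ 1 := by
  obtain ⟨j, hj⟩ := exists_ne i
  intro h
  simpa [hj] using congrFun h j

section HammingWeight

variable {ι : Type*} [Fintype ι]

lemma hammingDist_eq_hammingNorm_add (x y : ι → ZMod 2) :
    hammingDist x y = hammingNorm (x + y) := by
  rw [hammingDist_eq_hammingNorm, ZModModule.neg_eq_self]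

theorem hammingNorm_eq_one_iff_eq_single [DecidableEq ι] {z : ι → ZMod 2} :
    hammingNorm z = 1 ↔ ∃ i, z = Pi.single i 1 := by
  simp only [hammingNorm, Finset.card_eq_one, Finset.ext_iff, Finset.mem_filter,
    Finset.mem_univ, true_and, Finset.mem_singleton, funext_iff, Pi.single_apply]
  refine exists_congr fun i => forall_congr' fun j => ?_
  split_ifs with h <;> simp [h, zmod_two_ne_zero_iff, zmod_two_ne_one_iff]

theorem hammingNorm_eq_card_iff_eq_one {z : ι → ZMod 2} :
    hammingNorm z = Fintype.card ι ↔ z = 1 := by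
  simp only [hammingNorm, Finset.card_eq_iff_eq_univ, Finset.eq_univ_iff_forall,
    Finset.mem_filter, Finset.mem_univ, true_and, funext_iff, Pi.one_apply,
    zmod_two_ne_zero_iff]

theorem hammingNorm_add_single_lt [DecidableEq ι] {z : ι → ZMod 2} {i : ι} (h : z i ≠ 0) :
    hammingNorm (z + Pi.single i 1) < hammingNorm z := by
  refine Finset.card_lt_card ((Finset.ssubset_iff_of_subset fun k => ?_).2 ⟨i, ?_⟩)
  · by_cases hk : k = i
    · simp [hk, h]
    · simp [Pi.single_apply, hk]
  · simp [(zmod_two_ne_zero_iff _).1 h, ZModModule.add_self]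

lemma eq_zero_or_eq_single_of_hammingNorm_lt_two [DecidableEq ι] {v : ι → ZMod 2}
    (hv : hammingNorm v < 2) : v = 0 ∨ ∃ i, v = Pi.single i 1 := by
  rcases (by omega : hammingNorm v = 0 ∨ hammingNorm v = 1) with h | h
  · exact .inl (hammingNorm_eq_zero.1 h)
  · exact .inr (hammingNorm_eq_one_iff_eq_single.1 h)

end HammingWeight

namespace FQ

variable {n : ℕ}

/-- `pad v` is the representative of `v` in `(ZMod 2)^(n+1)` with last coordinate `0`, and `proj`
is the quotient map by the all-ones vector. -/
def pad (v : Fin n → ZMod 2) : Fin (n + 1) → ZMod 2 := Fin.snoc v 0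

def proj (y : Fin (n + 1) → ZMod 2) : Fin n → ZMod 2 := fun i => y i.castSucc + y (Fin.last n)

def gen (p : Fin (n + 1)) : Fin n → ZMod 2 := proj (Pi.single p 1)

def permAct (σ : Equiv.Perm (Fin (n + 1))) (v : Fin n → ZMod 2) : Fin n → ZMod 2 :=
  proj (pad v ∘ σ.symm)

@[simp] lemma pad_castSucc (v : Fin n → ZMod 2) (i : Fin n) : pad v i.castSucc = v i :=
  Fin.snoc_castSucc ..

@[simp] lemma pad_last (v : Fin n → ZMod 2) : pad v (Fin.last n) = 0 := Fin.snoc_last ..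

@[simp] lemma pad_zero : pad (0 : Fin n → ZMod 2) = 0 := by
  ext q
  induction q using Fin.lastCases <;> simp

lemma pad_add (u v : Fin n → ZMod 2) : pad (u + v) = pad u + pad v := by
  ext q
  induction q using Fin.lastCases <;> simp

lemma pad_one_eq_zero_iff {r : Fin (n + 1)} :
    pad (1 : Fin n → ZMod 2) r = 0 ↔ r = Fin.last n := by
  induction r using Fin.lastCases <;> simp [(Fin.castSucc_lt_last _).ne]

lemma proj_pad (v : Fin n → ZMod 2) : proj (pad v) = v := by
  ext i
  simp [proj]

lemma pad_proj_apply (y : Fin (n + 1) → ZMod 2) (q : Fin (n + 1)) :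
    pad (proj y) q = y q + y (Fin.last n) := by
  induction q using Fin.lastCases <;> simp [proj, ZModModule.add_self]

lemma proj_eq_proj_iff {y y' : Fin (n + 1) → ZMod 2} :
    proj y = proj y' ↔ ∃ c, ∀ q, y q = y' q + c := by
  constructor
  · intro h
    refine ⟨y (Fin.last n) + y' (Fin.last n), fun q => ?_⟩
    induction q using Fin.lastCases with
    | last => grind
    | cast i =>
      have hi := congrFun h i
      simp only [proj] at hi
      grind
  · rintro ⟨c, hc⟩
    ext i
    simp only [proj, hc]
    grind

@[simp] lemma gen_castSucc (i : Fin n) : gen i.castSucc = Pi.single i 1 := by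
  ext j
  simp [gen, proj, Pi.single_apply, (Fin.castSucc_lt_last _).ne']

@[simp] lemma gen_last : gen (Fin.last n) = 1 := by
  ext j
  simp [gen, proj, (Fin.castSucc_lt_last _).ne]

lemma gen_injective (hn : 2 ≤ n) : Function.Injective (gen (n := n)) := by
  have : Nontrivial (Fin n) := Fin.nontrivial_iff_two_le.2 hn
  intro p q h
  induction p using Fin.lastCases <;> induction q using Fin.lastCases
  · rfl
  · exact absurd (by simpa using h.symm) (Pi.single_one_ne_one _)
  · exact absurd (by simpa using h) (Pi.single_one_ne_one _)
  · rename_i i j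
    simpa [Pi.single_apply, eq_comm] using congrFun h i

lemma permAct_proj (σ : Equiv.Perm (Fin (n + 1))) (y : Fin (n + 1) → ZMod 2) :
    permAct σ (proj y) = proj (y ∘ σ.symm) :=
  proj_eq_proj_iff.2 ⟨y (Fin.last n), fun _ => pad_proj_apply _ _⟩

lemma permAct_mul (σ τ : Equiv.Perm (Fin (n + 1))) (v : Fin n → ZMod 2) :
    permAct (σ * τ) v = permAct σ (permAct τ v) := by
  change _ = permAct σ (proj (pad v ∘ τ.symm))
  rw [permAct_proj]
  rfl

lemma permAct_one (v : Fin n → ZMod 2) : permAct 1 v = v := proj_pad v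

@[simp] lemma permAct_zero (σ : Equiv.Perm (Fin (n + 1))) : permAct σ 0 = 0 := by
  ext
  simp [permAct, proj]

lemma permAct_add (σ : Equiv.Perm (Fin (n + 1))) (u v : Fin n → ZMod 2) :
    permAct σ (u + v) = permAct σ u + permAct σ v := by
  ext i
  simp only [permAct, proj, pad_add, Function.comp_apply, Pi.add_apply]
  abel

lemma permAct_gen (σ : Equiv.Perm (Fin (n + 1))) (p : Fin (n + 1)) :
    permAct σ (gen p) = gen (σ p) := by
  rw [gen, permAct_proj, Pi.single_comp_equiv, Equiv.symm_symm, gen]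

lemma permAct_eq_self_iff {σ : Equiv.Perm (Fin (n + 1))} {v : Fin n → ZMod 2} :
    permAct σ v = v ↔ ∃ c, ∀ q, pad v (σ.symm q) = pad v q + c := by
  conv_lhs => rhs; rw [← proj_pad v]
  exact proj_eq_proj_iff

lemma symm_last_of_permAct_one (hn : 2 ≤ n) {σ : Equiv.Perm (Fin (n + 1))}
    (h : permAct σ 1 = 1) : σ.symm (Fin.last n) = Fin.last n := by
  obtain ⟨c, hc⟩ := permAct_eq_self_iff.1 h
  rcases (by decide : ∀ c : ZMod 2, c = 0 ∨ c = 1) c with rfl | rfl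
  · simpa [pad_one_eq_zero_iff] using hc (Fin.last n)
  · have hlast (i : Fin n) : σ.symm i.castSucc = Fin.last n :=
      pad_one_eq_zero_iff.1 (by rw [hc]; simp [ZModModule.add_self])
    have := σ.symm.injective ((hlast ⟨0, by omega⟩).trans (hlast ⟨1, by omega⟩).symm)
    simp at this

lemma adj_iff (hn : 1 ≤ n) {x y : Fin n → ZMod 2} :
    (FQ n).Adj x y ↔ ∃ p, y = x + gen p := by
  have hnorm_eq_n (z : Fin n → ZMod 2) : hammingNorm z = n ↔ z = 1 := by
    rw [← hammingNorm_eq_card_iff_eq_one, Fintype.card_fin]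
  simp only [ZModModule.eq_add_iff_add_eq, Fin.exists_fin_succ', gen_castSucc, gen_last,
    ← hammingNorm_eq_one_iff_eq_single, ← hnorm_eq_n, FQ, SimpleGraph.fromRel_adj,
    hammingDist_eq_hammingNorm_add, add_comm y x, or_self]
  refine and_iff_right_of_imp fun h => ?_
  rintro rfl
  rw [ZModModule.add_self, hammingNorm_zero] at h
  omega

lemma adj_add_single (hn : 1 ≤ n) (v : Fin n → ZMod 2) (i : Fin n) :
    (FQ n).Adj (v + Pi.single i 1) v :=
  (adj_iff hn).2 ⟨i.castSucc, by rw [gen_castSucc, add_assoc, ZModModule.add_self, add_zero]⟩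

lemma adj_add_right_iff {x y : Fin n → ZMod 2} (v : Fin n → ZMod 2) :
    (FQ n).Adj (x + v) (y + v) ↔ (FQ n).Adj x y := by
  simp only [FQ, SimpleGraph.fromRel_adj, hammingDist_eq_hammingNorm_add, add_add_add_comm,
    ZModModule.add_self, add_zero, ne_eq, add_left_inj]

lemma adj_permAct (hn : 1 ≤ n) (σ : Equiv.Perm (Fin (n + 1))) {x y : Fin n → ZMod 2}
    (h : (FQ n).Adj x y) : (FQ n).Adj (permAct σ x) (permAct σ y) := by
  obtain ⟨p, rfl⟩ := (adj_iff hn).1 h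
  exact (adj_iff hn).2 ⟨σ p, by rw [permAct_add, permAct_gen]⟩

def translate (v : Fin n → ZMod 2) : FQ n ≃g FQ n := ⟨Equiv.addRight v, adj_add_right_iff v⟩

def permIso (hn : 1 ≤ n) (σ : Equiv.Perm (Fin (n + 1))) : FQ n ≃g FQ n where
  toFun := permAct σ
  invFun := permAct σ⁻¹
  left_inv v := by rw [← permAct_mul, inv_mul_cancel, permAct_one]
  right_inv v := by rw [← permAct_mul, mul_inv_cancel, permAct_one]
  map_rel_iff' := ⟨fun h => by simpa [← permAct_mul, permAct_one] using adj_permAct hn σ⁻¹ h,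
    adj_permAct hn σ⟩

@[simp] lemma permIso_apply (hn : 1 ≤ n) (σ : Equiv.Perm (Fin (n + 1))) (v : Fin n → ZMod 2) :
    permIso hn σ v = permAct σ v := rfl

lemma not_isDeterminingSet_of_pad_eq (hn : 2 ≤ n) {S : Set (Fin n → ZMod 2)}
    (v₀ : Fin n → ZMod 2) {p q : Fin (n + 1)} (hpq : p ≠ q)
    (h : ∀ s ∈ S, pad (s + v₀) p = pad (s + v₀) q) : ¬ IsDeterminingSet (FQ n) S := by
  intro hS
  let φ := (translate v₀).trans ((permIso (by omega) (Equiv.swap p q)).trans (translate v₀))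
  have hφ (x : Fin n → ZMod 2) : φ x = permAct (Equiv.swap p q) (x + v₀) + v₀ := rfl
  have hfix : ∀ s ∈ S, φ s = s := by
    intro s hs
    have hswap : permAct (Equiv.swap p q) (s + v₀) = s + v₀ := by
      refine permAct_eq_self_iff.2 ⟨0, fun r => ?_⟩
      rw [Equiv.symm_swap, add_zero, ← Function.comp_apply (f := pad _),
        Function.comp_swap_eq_self (h s hs)]
    rw [hφ, hswap, add_assoc, ZModModule.add_self, add_zero]
  have hmove := hS φ hfix (gen p + v₀)
  rw [hφ, add_assoc, ZModModule.add_self, add_zero, permAct_gen, Equiv.swap_apply_left,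
    add_left_inj] at hmove
  exact hpq (gen_injective hn hmove).symm

lemma exists_pad_eq_of_ncard_le (hn : 1 ≤ n) {S : Set (Fin n → ZMod 2)}
    (hS : S.ncard ≤ Nat.clog 2 (n + 1)) :
    ∃ v₀, ∃ p q, p ≠ q ∧ ∀ s ∈ S, pad (s + v₀) p = pad (s + v₀) q := by
  classical
  obtain ⟨v₀, hv₀⟩ : ∃ v₀, (S \ {v₀}).ncard < Nat.clog 2 (n + 1) := by
    rcases S.eq_empty_or_nonempty with rfl | ⟨v₀, hv₀⟩
    · exact ⟨0, by simpa using Nat.clog_pos one_lt_two (by omega : 1 < n + 1)⟩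
    · refine ⟨v₀, ?_⟩
      have := (Set.ncard_pos (Set.toFinite S)).2 ⟨v₀, hv₀⟩
      rw [Set.ncard_sdiff_singleton_of_mem hv₀]
      omega
  let column (p : Fin (n + 1)) (s : ↥(S \ {v₀})) : ZMod 2 := pad (s.1 + v₀) p
  have hcard : Fintype.card (↥(S \ {v₀}) → ZMod 2) < Fintype.card (Fin (n + 1)) := by
    rw [Fintype.card_fun, ZMod.card, Fintype.card_fin, ← Nat.card_eq_fintype_card,
      Nat.card_coe_set_eq]
    exact Nat.pow_lt_of_lt_clog hv₀
  obtain ⟨p, q, hpq, hcol⟩ := Fintype.exists_ne_map_eq_of_card_lt column hcard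
  refine ⟨v₀, p, q, hpq, fun s hs => ?_⟩
  by_cases hs₀ : s = v₀
  · simp [hs₀, ZModModule.add_self]
  · exact congrFun hcol ⟨s, hs, hs₀⟩

theorem clog_lt_ncard_of_isDeterminingSet (hn : 2 ≤ n) {S : Set (Fin n → ZMod 2)}
    (hS : IsDeterminingSet (FQ n) S) : Nat.clog 2 (n + 1) < S.ncard := by
  by_contra! h
  obtain ⟨v₀, p, q, hpq, hcol⟩ := exists_pad_eq_of_ncard_le (by omega) h
  exact not_isDeterminingSet_of_pad_eq hn v₀ hpq hcol hS

lemma single_add_single_ne_single_add_one (hn : 4 ≤ n) (i j s : Fin n) :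
    (Pi.single i 1 + Pi.single s 1 : Fin n → ZMod 2) ≠ Pi.single j 1 + 1 := by
  obtain ⟨k, -, hk⟩ := Finset.exists_mem_notMem_of_card_lt_card
    (s := {i, j, s}) (t := Finset.univ) (by grind [Finset.card_le_three, Finset.card_univ,
      Fintype.card_fin])
  simp only [Finset.mem_insert, Finset.mem_singleton, not_or] at hk
  intro h
  simpa [hk.1, hk.2.1, hk.2.2] using congrFun h k

lemma eq_or_eq_of_adj_add_single (hn : 4 ≤ n) {v x : Fin n → ZMod 2} {i j : Fin n} (hij : i ≠ j)
    (hi : (FQ n).Adj (v + Pi.single i 1) x) (hj : (FQ n).Adj (v + Pi.single j 1) x) :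
    x = v ∨ x = v + Pi.single i 1 + Pi.single j 1 := by
  obtain ⟨p, rfl⟩ := (adj_iff (by omega)).1 hi
  obtain ⟨q, hq⟩ := (adj_iff (by omega)).1 hj
  rw [add_assoc, add_assoc, add_right_inj] at hq
  induction p using Fin.lastCases <;> induction q using Fin.lastCases
  · simpa [hij] using congrFun hq i
  · simp only [gen_castSucc, gen_last] at hq
    exact (single_add_single_ne_single_add_one hn _ _ _ hq.symm).elim
  · simp only [gen_castSucc, gen_last] at hq
    exact (single_add_single_ne_single_add_one hn _ _ _ hq).elim
  · rename_i s t
    simp only [gen_castSucc] at hq ⊢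
    by_cases hs : s = i
    · left
      rw [hs, add_assoc, ZModModule.add_self, add_zero]
    · right
      obtain rfl : i = t := by simpa [Pi.single_apply, Ne.symm hs, hij] using congrFun hq i
      obtain rfl : s = j := by simpa [Pi.single_apply, hs] using congrFun hq s
      rfl

theorem eq_self_of_map_single (hn : 4 ≤ n) (ψ : FQ n ≃g FQ n) (h₀ : ψ 0 = 0)
    (h₁ : ∀ i, ψ (Pi.single i 1) = Pi.single i 1) (v : Fin n → ZMod 2) : ψ v = v := by
  rcases lt_or_ge (hammingNorm v) 2 with hv | hv
  · rcases eq_zero_or_eq_single_of_hammingNorm_lt_two hv with rfl | ⟨i, rfl⟩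
    exacts [h₀, h₁ i]
  obtain ⟨i, hi, j, hj, hij⟩ : ∃ i, v i ≠ 0 ∧ ∃ j, v j ≠ 0 ∧ i ≠ j := by
    simpa using Finset.one_lt_card.1 hv
  have hj' : (v + Pi.single i 1 : Fin n → ZMod 2) j ≠ 0 := by
    simpa [Pi.single_apply, hij.symm] using hj
  have ha := eq_self_of_map_single hn ψ h₀ h₁ (v + Pi.single i 1)
  have hb := eq_self_of_map_single hn ψ h₀ h₁ (v + Pi.single j 1)
  have hw := eq_self_of_map_single hn ψ h₀ h₁ (v + Pi.single i 1 + Pi.single j 1)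
  have hadj (k : Fin n) (hk : ψ (v + Pi.single k 1) = v + Pi.single k 1) :
      (FQ n).Adj (v + Pi.single k 1) (ψ v) := by
    simpa [hk] using ψ.map_adj_iff.2 (adj_add_single (by omega) v k)
  refine (eq_or_eq_of_adj_add_single hn hij (hadj i ha) (hadj j hb)).resolve_right fun h => ?_
  have hvw := ψ.injective (h.trans hw.symm)
  simpa [Pi.single_apply, hij] using congrFun hvw i
termination_by hammingNorm v
decreasing_by
  · exact hammingNorm_add_single_lt hi
  · exact hammingNorm_add_single_lt hj
  · exact (hammingNorm_add_single_lt hj').trans (hammingNorm_add_single_lt hi)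

theorem exists_perm_of_map_zero (hn : 4 ≤ n) (φ : FQ n ≃g FQ n) (h₀ : φ 0 = 0) :
    ∃ σ : Equiv.Perm (Fin (n + 1)), ∀ v, φ v = permAct σ v := by
  have hgen (p : Fin (n + 1)) : ∃ q, φ (gen p) = gen q := by
    have hadj : (FQ n).Adj 0 (gen p) := (adj_iff (by omega)).2 ⟨p, (zero_add _).symm⟩
    simpa [h₀, adj_iff (show 1 ≤ n by omega)] using φ.map_adj_iff.2 hadj
  choose f hf using hgen
  have hf_inj : Function.Injective f := fun p q h =>
    gen_injective (by omega) (φ.injective (by rw [hf, hf, h]))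
  let σ := Equiv.ofBijective f (Finite.injective_iff_bijective.1 hf_inj)
  refine ⟨σ, fun v => ?_⟩
  have hψ := eq_self_of_map_single hn (φ.trans (permIso (by omega) σ⁻¹)) (by simp [h₀])
    (fun i => by simp [← gen_castSucc, hf, permAct_gen, σ]) v
  calc φ v = permAct σ (permAct σ⁻¹ (φ v)) := by rw [← permAct_mul, mul_inv_cancel, permAct_one]
    _ = permAct σ v := by simpa using congrArg (permAct σ) hψ

theorem isDeterminingSet_of_pad_injective (hn : 4 ≤ n) {S : Set (Fin n → ZMod 2)}
    (h₀ : 0 ∈ S) (h₁ : 1 ∈ S) (hS : ∀ p q, (∀ s ∈ S, pad s p = pad s q) → p = q) :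
    IsDeterminingSet (FQ n) S := by
  intro φ hφ v
  obtain ⟨σ, hσ⟩ := exists_perm_of_map_zero hn φ (hφ 0 h₀)
  have hfix (s) (hs : s ∈ S) : permAct σ s = s := (hσ s).symm.trans (hφ s hs)
  have hlast := symm_last_of_permAct_one (by omega) (hfix 1 h₁)
  have hσ₁ : σ = 1 := by
    refine Equiv.ext fun q => ((σ.symm_apply_eq).1 (hS _ _ fun s hs => ?_)).symm
    obtain ⟨c, hc⟩ := permAct_eq_self_iff.1 (hfix s hs)
    obtain rfl : c = 0 := by simpa [hlast] using (hc (Fin.last n)).symm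
    simpa using hc q
  rw [hσ, hσ₁, permAct_one]

def bitVec (n k : ℕ) : Fin n → ZMod 2 := fun i => if (i : ℕ).testBit k then 1 else 0

def binarySet (n : ℕ) : Set (Fin n → ZMod 2) :=
  insert 0 (insert 1 (Set.range fun k : Fin (Nat.clog 2 n) => bitVec n k))

lemma ncard_binarySet_le : (binarySet n).ncard ≤ Nat.clog 2 n + 2 := by
  have hrange := Finite.card_range_le fun k : Fin (Nat.clog 2 n) => bitVec n k
  rw [Nat.card_coe_set_eq, Nat.card_eq_fintype_card, Fintype.card_fin] at hrange
  have := Set.ncard_insert_le (0 : Fin n → ZMod 2)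
    (insert 1 (Set.range fun k : Fin (Nat.clog 2 n) => bitVec n k))
  have := Set.ncard_insert_le (1 : Fin n → ZMod 2)
    (Set.range fun k : Fin (Nat.clog 2 n) => bitVec n k)
  rw [binarySet]
  omega

lemma binarySet_pad_injective (p q : Fin (n + 1)) (h : ∀ s ∈ binarySet n, pad s p = pad s q) :
    p = q := by
  have h₁ := h 1 (by simp [binarySet])
  induction p using Fin.lastCases <;> induction q using Fin.lastCases
  · rfl
  · simp at h₁
  · simp at h₁
  · rename_i i j
    refine congrArg _ (Fin.ext (Nat.eq_of_testBit_eq fun k => ?_))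
    by_cases hk : k < Nat.clog 2 n
    · have := h (bitVec n k) (by simp [binarySet]; exact Or.inr (Or.inr ⟨⟨k, hk⟩, rfl⟩))
      simp only [pad_castSucc, bitVec] at this
      by_cases hi : (i : ℕ).testBit k <;> by_cases hj : (j : ℕ).testBit k <;> simp_all
    · have hpow : n ≤ 2 ^ k := (Nat.le_pow_clog one_lt_two n).trans
        (Nat.pow_le_pow_right two_pos (not_lt.1 hk))
      rw [Nat.testBit_lt_two_pow (i.2.trans_le hpow), Nat.testBit_lt_two_pow (j.2.trans_le hpow)]

end FQ

/-- For `n ≥ 4`, `⌈lg(n+1)⌉ + 1 ≤ det(FQ_n) ≤ ⌈lg n⌉ + 2`. -/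
theorem stmt11 (n : ℕ) (hn : 4 ≤ n) :
    Nat.clog 2 (n + 1) + 1 ≤ detNum (FQ n) ∧
      detNum (FQ n) ≤ Nat.clog 2 n + 2 := by
  constructor
  · refine le_csInf ⟨_, Set.univ, rfl, fun φ h v => h v trivial⟩ ?_
    rintro r ⟨S, rfl, hS⟩
    exact FQ.clog_lt_ncard_of_isDeterminingSet (by omega) hS
  · calc detNum (FQ n) ≤ (FQ.binarySet n).ncard :=
          Nat.sInf_le ⟨_, rfl, FQ.isDeterminingSet_of_pad_injective hn (by simp [FQ.binarySet])
            (by simp [FQ.binarySet]) FQ.binarySet_pad_injective⟩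
      _ ≤ Nat.clog 2 n + 2 := FQ.ncard_binarySet_le
end

section
/- For n ≥ 3, the augmented hypercube AQ_n is neither edge-transitive nor arc-transitive. -/
/-! In characteristic 2, `AQ_n` is the Cayley graph of `(ZMod 2)ⁿ` with respect to the unit
vectors `eⱼ` and the suffixes of ones `tₗ` (`l ≤ n - 2`), so the common neighbours of `0` and `u`
are the generators `z` with `z - u` again a generator. For the edge `0 ~ t₀ = 𝟙` this forces
`z` and `𝟙 - z` to be complementary generators, and for `n ≥ 3` only `{e₀, t₁}` are; so that edge
lies on at most two triangles. The edge `0 ~ tₙ₋₂` lies on at least three, through `eₙ₋₂`, `eₙ₋₁`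
and `tₙ₋₃`. Automorphisms preserve the number of triangles on an edge, so no automorphism maps one
edge to the other, in either orientation. -/

/-- The augmented hypercube `AQ_n`: binary `n`-vectors, adjacent iff they differ
in exactly one position, or for some `ℓ ≤ n-2` they agree in the first `ℓ`
positions and differ in all remaining ones. -/
def AQ (n : ℕ) : SimpleGraph (Fin n → ZMod 2) :=
  SimpleGraph.fromRel (fun x y => hammingDist x y = 1 ∨
    ∃ l : ℕ, l ≤ n - 2 ∧ (∀ i : Fin n, (i : ℕ) < l → x i = y i) ∧
      (∀ i : Fin n, l ≤ (i : ℕ) → x i ≠ y i))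

namespace SimpleGraph

variable {V W : Type*}

def IsEdgeTransitive (G : SimpleGraph V) : Prop :=
  ∀ a b c d : V, G.Adj a b → G.Adj c d →
    ∃ φ : G ≃g G, (φ a = c ∧ φ b = d) ∨ (φ a = d ∧ φ b = c)

def IsArcTransitive (G : SimpleGraph V) : Prop :=
  ∀ a b c d : V, G.Adj a b → G.Adj c d → ∃ φ : G ≃g G, φ a = c ∧ φ b = d

theorem IsArcTransitive.isEdgeTransitive {G : SimpleGraph V} (h : G.IsArcTransitive) :
    G.IsEdgeTransitive := fun a b c d hab hcd =>
  let ⟨φ, hφ⟩ := h a b c d hab hcd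
  ⟨φ, Or.inl hφ⟩

theorem Iso.ncard_commonNeighbors {G : SimpleGraph V} {H : SimpleGraph W} (φ : G ≃g H)
    (a b : V) : (H.commonNeighbors (φ a) (φ b)).ncard = (G.commonNeighbors a b).ncard := by
  have : φ ⁻¹' H.commonNeighbors (φ a) (φ b) = G.commonNeighbors a b := by
    ext z
    simp only [Set.mem_preimage, mem_commonNeighbors, Iso.map_adj_iff]
  rw [← this, Set.ncard_preimage_of_injective_subset_range φ.injective]
  simp [φ.surjective.range_eq]

theorem not_isEdgeTransitive_of_ncard_commonNeighbors_ne {G : SimpleGraph V} {a b c d : V}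
    (hab : G.Adj a b) (hcd : G.Adj c d)
    (h : (G.commonNeighbors a b).ncard ≠ (G.commonNeighbors c d).ncard) :
    ¬ G.IsEdgeTransitive := by
  intro hG
  obtain ⟨φ, ⟨rfl, rfl⟩ | ⟨rfl, rfl⟩⟩ := hG a b c d hab hcd
  · exact h (φ.ncard_commonNeighbors a b).symm
  · exact h (by rw [commonNeighbors_symm, φ.ncard_commonNeighbors])

end SimpleGraph

theorem ZMod.two_sub_eq_iff (a b c : ZMod 2) : b - a = c ↔ (a ≠ b ↔ c = 1) := by
  revert a b c; decide

theorem Pi.zmodTwo_sub_eq_iff {ι : Type*} (x y v : ι → ZMod 2) :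
    y - x = v ↔ ∀ i, (x i ≠ y i ↔ v i = 1) := by
  simp only [funext_iff, Pi.sub_apply, ZMod.two_sub_eq_iff]

theorem Pi.zmodTwo_sub_comm {ι : Type*} (x y : ι → ZMod 2) : x - y = y - x := by
  funext i
  exact (by decide : ∀ a b : ZMod 2, a - b = b - a) (x i) (y i)

theorem ZMod.two_ne_iff (a b : ZMod 2) : a ≠ b ↔ (a = 1 ↔ b ≠ 1) := by
  revert a b; decide

theorem ZMod.two_sub_eq_of_iff {a b c : ZMod 2} (h : b = 1 ↔ (a = 1 ↔ c ≠ 1)) : b - a = c := by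
  revert a b c; decide

theorem Pi.zmodTwo_sub_eq_of_forall {ι : Type*} {x y v : ι → ZMod 2}
    (h : ∀ i, (y i = 1 ↔ (x i = 1 ↔ v i ≠ 1))) : y - x = v :=
  funext fun i => ZMod.two_sub_eq_of_iff (h i)

namespace AQ

def unitVec (n j : ℕ) (i : Fin n) : ZMod 2 := if (i : ℕ) = j then 1 else 0

def suffixOnes (n l : ℕ) (i : Fin n) : ZMod 2 := if l ≤ (i : ℕ) then 1 else 0

def gens (n : ℕ) : Set (Fin n → ZMod 2) :=
  {v | (∃ j < n, v = unitVec n j) ∨ ∃ l ≤ n - 2, v = suffixOnes n l}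

variable {n : ℕ}

@[simp]
theorem unitVec_eq_one_iff {j : ℕ} {i : Fin n} : unitVec n j i = 1 ↔ (i : ℕ) = j := by
  simp [unitVec]

@[simp]
theorem suffixOnes_eq_one_iff {l : ℕ} {i : Fin n} : suffixOnes n l i = 1 ↔ l ≤ (i : ℕ) := by
  simp [suffixOnes]

theorem hammingDist_eq_one_iff (x y : Fin n → ZMod 2) :
    hammingDist x y = 1 ↔ ∃ j < n, y - x = unitVec n j := by
  simp only [hammingDist, Finset.card_eq_one, Pi.zmodTwo_sub_eq_iff, unitVec_eq_one_iff,
    Finset.ext_iff, Finset.mem_filter, Finset.mem_univ, true_and, Finset.mem_singleton]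
  constructor
  · rintro ⟨j, hj⟩
    exact ⟨j, j.isLt, fun i => (hj i).trans Fin.val_inj.symm⟩
  · rintro ⟨j, hj, h⟩
    exact ⟨⟨j, hj⟩, fun i => (h i).trans (Fin.ext_iff (b := ⟨j, hj⟩)).symm⟩

theorem differ_on_suffix_iff (x y : Fin n → ZMod 2) (l : ℕ) :
    ((∀ i : Fin n, (i : ℕ) < l → x i = y i) ∧ (∀ i : Fin n, l ≤ (i : ℕ) → x i ≠ y i)) ↔
      y - x = suffixOnes n l := by
  simp only [Pi.zmodTwo_sub_eq_iff, suffixOnes_eq_one_iff]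
  refine ⟨fun ⟨h1, h2⟩ i => ⟨fun h => ?_, h2 i⟩, fun h => ⟨fun i hi => ?_, fun i => (h i).2⟩⟩
  · by_contra hi
    exact h (h1 i (not_le.mp hi))
  · by_contra hne
    exact absurd ((h i).1 hne) (not_le.mpr hi)

theorem zero_notMem_gens (hn : 0 < n) : (0 : Fin n → ZMod 2) ∉ gens n := by
  rintro (⟨j, hj, h⟩ | ⟨l, hl, h⟩)
  · simpa [unitVec] using (congrFun h ⟨j, hj⟩).symm
  · have := congrFun h ⟨n - 1, by omega⟩
    simp [suffixOnes] at this
    omega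

theorem adj_iff_sub_mem_gens (hn : 0 < n) (x y : Fin n → ZMod 2) :
    (AQ n).Adj x y ↔ y - x ∈ gens n := by
  have hrel : ∀ x y : Fin n → ZMod 2, (hammingDist x y = 1 ∨
      ∃ l : ℕ, l ≤ n - 2 ∧ (∀ i : Fin n, (i : ℕ) < l → x i = y i) ∧
        (∀ i : Fin n, l ≤ (i : ℕ) → x i ≠ y i)) ↔ y - x ∈ gens n := by
    intro x y
    simp only [hammingDist_eq_one_iff, differ_on_suffix_iff, gens, Set.mem_ofPred_eq]
  rw [AQ, SimpleGraph.fromRel_adj, hrel, hrel, Pi.zmodTwo_sub_comm y x, or_self]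
  refine ⟨And.right, fun h => ⟨fun hxy => zero_notMem_gens hn ?_, h⟩⟩
  rwa [hxy, sub_self] at h

theorem eq_of_mem_gens_of_forall_ne (hn : 3 ≤ n) {u v : Fin n → ZMod 2} (hu : u ∈ gens n)
    (hv : v ∈ gens n) (h : ∀ k, u k ≠ v k) : u = unitVec n 0 ∨ u = suffixOnes n 1 := by
  replace h k := (ZMod.two_ne_iff _ _).1 (h k)
  -- the coordinates `0, 1, 2, n - 1` and the support of a unit vector already decide every case
  have h0 := h ⟨0, by omega⟩
  have h1 := h ⟨1, by omega⟩
  have h2 := h ⟨2, by omega⟩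
  have hlast := h ⟨n - 1, by omega⟩
  rcases hu with ⟨i, hi, rfl⟩ | ⟨l, hl, rfl⟩ <;> rcases hv with ⟨j, hj, rfl⟩ | ⟨m, hm, rfl⟩ <;>
    simp only [ne_eq, unitVec_eq_one_iff, suffixOnes_eq_one_iff] at h0 h1 h2 hlast
  · omega
  · have hi' := h ⟨i, hi⟩
    simp only [ne_eq, unitVec_eq_one_iff, suffixOnes_eq_one_iff, true_iff] at hi'
    left
    congr
    omega
  · have hj' := h ⟨j, hj⟩
    simp only [ne_eq, unitVec_eq_one_iff, suffixOnes_eq_one_iff, not_true, iff_false] at hj'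
    right
    congr
    omega
  · omega

theorem commonNeighbors_zero_suffixOnes_zero_subset (hn : 3 ≤ n) :
    (AQ n).commonNeighbors 0 (suffixOnes n 0) ⊆ {unitVec n 0, suffixOnes n 1} := by
  intro z hz
  rw [SimpleGraph.mem_commonNeighbors, adj_iff_sub_mem_gens (by omega),
    adj_iff_sub_mem_gens (by omega), sub_zero] at hz
  refine eq_of_mem_gens_of_forall_ne hn hz.1 hz.2 fun k hk => ?_
  simp only [Pi.sub_apply, suffixOnes, Nat.zero_le, if_true] at hk
  exact one_ne_zero (sub_eq_self.mp hk.symm)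

theorem ncard_commonNeighbors_zero_suffixOnes_zero_le (hn : 3 ≤ n) :
    ((AQ n).commonNeighbors 0 (suffixOnes n 0)).ncard ≤ 2 :=
  (Set.ncard_le_ncard (commonNeighbors_zero_suffixOnes_zero_subset hn)).trans
    ((Set.ncard_insert_le _ _).trans (by rw [Set.ncard_singleton]))

theorem two_lt_ncard_commonNeighbors_zero_suffixOnes (hn : 3 ≤ n) :
    2 < ((AQ n).commonNeighbors 0 (suffixOnes n (n - 2))).ncard := by
  have mem {z v : Fin n → ZMod 2} (hz : z ∈ gens n) (hv : v ∈ gens n)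
      (h : ∀ i, (z i = 1 ↔ (suffixOnes n (n - 2) i = 1 ↔ v i ≠ 1))) :
      z ∈ (AQ n).commonNeighbors 0 (suffixOnes n (n - 2)) := by
    rw [SimpleGraph.mem_commonNeighbors, adj_iff_sub_mem_gens (by omega),
      adj_iff_sub_mem_gens (by omega), sub_zero, Pi.zmodTwo_sub_eq_of_forall h]
    exact ⟨hz, hv⟩
  have ne_of_apply_eq_one_iff {u v : Fin n → ZMod 2} (k : Fin n) (hk : ¬(u k = 1 ↔ v k = 1)) :
      u ≠ v := fun h => hk (by rw [h])
  rw [Set.two_lt_ncard_iff]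
  refine ⟨unitVec n (n - 2), unitVec n (n - 1), suffixOnes n (n - 3), ?_, ?_, ?_, ?_, ?_, ?_⟩
  · refine mem (Or.inl ⟨n - 2, by omega, rfl⟩) (Or.inl ⟨n - 1, by omega, rfl⟩) fun i => ?_
    simp only [ne_eq, unitVec_eq_one_iff, suffixOnes_eq_one_iff]
    omega
  · refine mem (Or.inl ⟨n - 1, by omega, rfl⟩) (Or.inl ⟨n - 2, by omega, rfl⟩) fun i => ?_
    simp only [ne_eq, unitVec_eq_one_iff, suffixOnes_eq_one_iff]
    omega
  · refine mem (Or.inr ⟨n - 3, by omega, rfl⟩) (Or.inl ⟨n - 3, by omega, rfl⟩) fun i => ?_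
    simp only [ne_eq, unitVec_eq_one_iff, suffixOnes_eq_one_iff]
    omega
  · exact ne_of_apply_eq_one_iff ⟨n - 1, by omega⟩
      (by simp only [unitVec_eq_one_iff, iff_true]; omega)
  · exact ne_of_apply_eq_one_iff ⟨n - 1, by omega⟩
      (by simp only [unitVec_eq_one_iff, suffixOnes_eq_one_iff]; omega)
  · exact ne_of_apply_eq_one_iff ⟨n - 3, by omega⟩
      (by simp only [unitVec_eq_one_iff, suffixOnes_eq_one_iff]; omega)

theorem adj_zero_suffixOnes (hn : 0 < n) {l : ℕ} (hl : l ≤ n - 2) :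
    (AQ n).Adj 0 (suffixOnes n l) := by
  rw [adj_iff_sub_mem_gens hn, sub_zero]
  exact Or.inr ⟨l, hl, rfl⟩

end AQ

/-- For `n ≥ 3`, `AQ_n` is neither edge-transitive nor arc-transitive. -/
theorem stmt17 (n : ℕ) (hn : 3 ≤ n) :
    (¬ ∀ a b c d : Fin n → ZMod 2, (AQ n).Adj a b → (AQ n).Adj c d →
        ∃ φ : AQ n ≃g AQ n, (φ a = c ∧ φ b = d) ∨ (φ a = d ∧ φ b = c)) ∧
    (¬ ∀ a b c d : Fin n → ZMod 2, (AQ n).Adj a b → (AQ n).Adj c d →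
        ∃ φ : AQ n ≃g AQ n, φ a = c ∧ φ b = d) := by
  have hcard := (AQ.ncard_commonNeighbors_zero_suffixOnes_zero_le hn).trans_lt
    (AQ.two_lt_ncard_commonNeighbors_zero_suffixOnes hn)
  have not_edge : ¬ (AQ n).IsEdgeTransitive :=
    SimpleGraph.not_isEdgeTransitive_of_ncard_commonNeighbors_ne
      (AQ.adj_zero_suffixOnes (by omega) (Nat.zero_le _))
      (AQ.adj_zero_suffixOnes (by omega) le_rfl) hcard.ne
  exact ⟨not_edge, fun h => not_edge (SimpleGraph.IsArcTransitive.isEdgeTransitive h)⟩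
end
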